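/- arXiv:2209.00140 — 9 statements merged into one kernel-verified Lean document; each statement's English description precedes it below -/
import Mathlib

section
/- For every nonzero vector v ∈ ℝ^n and every a ∈ ℝ, if x is chosen uniformly at random from {0,1}^n, then ℙ(⟨x, v⟩ = a) ≤ 1/√|supp(v)|. -/
/-!
Replacing `x i` by `1 - x i` on the coordinates with `v i < 0` turns `⟨x, v⟩` into a constant
plus `∑ i ∈ T, |v i|`, where the set `T` determines `x`. Since `|v i| > 0` on the support, the
sets `T` with a given sum form an antichain, so by Sperner's theorem the cube over the support,
of dimension `s`, contains at most `s.choose (s / 2)` solutions. Coordinates outside the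
support do not affect `⟨x, v⟩`, so the probability is at most
`s.choose (s / 2) / 2 ^ s ≤ 1 / √s`; the last bound follows from
`centralBinom m ^ 2 * (2 * m + 1) ≤ 16 ^ m`, proved by induction on `m`.
-/

open Finset

/-- The probability, over `x` chosen uniformly at random from `{0,1}^n`
(encoded as `Fin n → Fin 2`), of an event `E`. -/
noncomputable def cubeProb (n : ℕ) (E : Set (Fin n → Fin 2)) : ℝ :=
  (E.ncard : ℝ) / 2 ^ n

namespace Nat

theorem centralBinom_sq_mul_le (m : ℕ) : m.centralBinom ^ 2 * (2 * m + 1) ≤ 16 ^ m := by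
  induction m with
  | zero => simp
  | succ m ih =>
    have hrec := succ_mul_centralBinom_succ m
    have hsq : (m + 1) ^ 2 * ((m + 1).centralBinom ^ 2 * (2 * (m + 1) + 1))
        ≤ (m + 1) ^ 2 * 16 ^ (m + 1) :=
      calc (m + 1) ^ 2 * ((m + 1).centralBinom ^ 2 * (2 * (m + 1) + 1))
          = 4 * ((2 * m + 1) * (2 * m + 3)) * (m.centralBinom ^ 2 * (2 * m + 1)) := by
            rw [← mul_assoc, ← mul_pow, hrec]; ring
        _ ≤ 4 * (2 * m + 2) ^ 2 * 16 ^ m := by gcongr; nlinarith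
        _ = (m + 1) ^ 2 * 16 ^ (m + 1) := by ring
    exact Nat.le_of_mul_le_mul_left hsq (by positivity)

theorem choose_half_sq_mul_le (s : ℕ) : s.choose (s / 2) ^ 2 * s ≤ 4 ^ s := by
  obtain ⟨m, rfl | rfl⟩ := s.even_or_odd'
  · have h := centralBinom_sq_mul_le m
    rw [centralBinom_eq_two_mul_choose] at h
    calc (2 * m).choose (2 * m / 2) ^ 2 * (2 * m) ≤ (2 * m).choose m ^ 2 * (2 * m + 1) := by
          rw [Nat.mul_div_cancel_left m two_pos]; gcongr; omega
      _ ≤ 16 ^ m := h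
      _ = 4 ^ (2 * m) := by rw [pow_mul]; norm_num
  · have hhalf : 2 * (2 * m + 1).choose m = (m + 1).centralBinom := by
      rw [centralBinom_eq_two_mul_choose, show 2 * (m + 1) = 2 * m + 1 + 1 by ring,
        choose_succ_succ, choose_symm_half]; ring
    have h := centralBinom_sq_mul_le (m + 1)
    rw [← hhalf, mul_pow] at h
    rw [show (2 * m + 1) / 2 = m by omega]
    refine Nat.le_of_mul_le_mul_left ?_ (show 0 < 2 ^ 2 by norm_num)
    calc 2 ^ 2 * ((2 * m + 1).choose m ^ 2 * (2 * m + 1))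
        ≤ 2 ^ 2 * (2 * m + 1).choose m ^ 2 * (2 * (m + 1) + 1) := by
          rw [← mul_assoc]; gcongr; omega
      _ ≤ 16 ^ (m + 1) := h
      _ = 2 ^ 2 * 4 ^ (2 * m + 1) := by rw [pow_succ 4, pow_mul]; ring

theorem choose_half_div_two_pow_le {s : ℕ} (hs : s ≠ 0) :
    (s.choose (s / 2) : ℝ) / 2 ^ s ≤ 1 / √s := by
  have hsqrt : 0 < √(s : ℝ) := Real.sqrt_pos.mpr (by positivity)
  rw [div_le_div_iff₀ (by positivity) hsqrt, one_mul,
    ← pow_le_pow_iff_left₀ (by positivity) (by positivity) two_ne_zero, mul_pow,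
    Real.sq_sqrt s.cast_nonneg, ← pow_mul, mul_comm s, pow_mul]
  exact_mod_cast (choose_half_sq_mul_le s).trans_eq (by norm_num)

end Nat

theorem isAntichain_setOf_sum_eq {ι M : Type*} [AddCommMonoid M] [PartialOrder M]
    [IsOrderedCancelAddMonoid M] {w : ι → M} (hw : ∀ i, 0 < w i) (b : M) :
    IsAntichain (· ⊆ ·) {T : Finset ι | ∑ i ∈ T, w i = b} := by
  intro P hP Q hQ hne hPQ
  obtain ⟨i, hiQ, hiP⟩ := exists_of_ssubset (hPQ.ssubset_of_ne hne)
  exact (sum_lt_sum_of_subset hPQ hiQ hiP (hw i) fun j _ _ ↦ (hw j).le).ne (hP.trans hQ.symm)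

theorem Fintype.card_filter_comp_restrict {ι β : Type*} [Fintype ι] [DecidableEq ι]
    [Fintype β] (p : ι → Prop) [DecidablePred p] (Q : ({i // p i} → β) → Prop)
    [DecidablePred Q] :
    #{x : ι → β | Q fun i ↦ x i} = #{y | Q y} * card β ^ card {i // ¬p i} := by
  calc #{x : ι → β | Q fun i ↦ x i} = card {x : ι → β // Q fun i ↦ x i} :=
        (card_subtype _).symm
    _ = card {q : ({i // p i} → β) × ({i // ¬p i} → β) // Q q.1} :=
        card_congr ((Equiv.piEquivPiSubtypeProd p _).subtypeEquiv fun _ ↦ Iff.rfl)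
    _ = card ({y // Q y} × ({i // ¬p i} → β)) :=
        card_congr Equiv.prodSubtypeFstEquivSubtypeProd
    _ = _ := by rw [card_prod, card_subtype, card_fun]

theorem sum_subtype_ne_zero_mul {ι R : Type*} [Fintype ι] [NonUnitalNonAssocSemiring R]
    [DecidableEq R] (f v : ι → R) : ∑ i : {i // v i ≠ 0}, f i * v i = ∑ i, f i * v i := by
  have hzero : ∑ i : {i // ¬v i ≠ 0}, f i * v i = 0 :=
    sum_eq_zero fun i _ ↦ by rw [not_not.mp i.2, mul_zero]
  rw [← Fintype.sum_subtype_add_sum_subtype (fun i ↦ v i ≠ 0), hzero, add_zero]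

section LittlewoodOfford

variable {ι : Type*} [Fintype ι]

/-- For `v i ≠ 0`, the coordinates at which `x` differs from the minimiser of `⟨·, v⟩`. -/
noncomputable def flipSet (v : ι → ℝ) (x : ι → Fin 2) : Finset ι :=
  {i | x i = 1 ↔ 0 < v i}

theorem Fin.cast_val_mul_eq_min_add_ite (b : Fin 2) (r : ℝ) :
    ((b : ℕ) : ℝ) * r = min r 0 + if b = 1 ↔ 0 < r then |r| else 0 := by
  rcases lt_trichotomy r 0 with hr | rfl | hr
  · fin_cases b <;> simp [hr.le, not_lt_of_gt hr, abs_of_neg hr]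
  · simp
  · fin_cases b <;> simp [hr, hr.le, abs_of_pos hr]

theorem sum_mul_eq_add_sum_flipSet (v : ι → ℝ) (x : ι → Fin 2) :
    ∑ i, ((x i : ℕ) : ℝ) * v i = ∑ i, min (v i) 0 + ∑ i ∈ flipSet v x, |v i| := by
  simp only [Fin.cast_val_mul_eq_min_add_ite, sum_add_distrib, flipSet, sum_filter]

theorem flipSet_injective (v : ι → ℝ) : Function.Injective (flipSet v) := by
  intro x y h
  funext i
  have hi : (x i = 1 ↔ 0 < v i) ↔ (y i = 1 ↔ 0 < v i) := by
    simpa [flipSet] using congrArg (i ∈ ·) h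
  have hxy : x i = 1 ↔ y i = 1 := by tauto
  revert hxy
  generalize x i = a
  generalize y i = b
  fin_cases a <;> fin_cases b <;> simp

theorem card_sum_mul_eq_le_choose [DecidableEq ι] {v : ι → ℝ} (hv : ∀ i, v i ≠ 0)
    (a : ℝ) :
    #{x : ι → Fin 2 | ∑ i, ((x i : ℕ) : ℝ) * v i = a}
      ≤ (Fintype.card ι).choose (Fintype.card ι / 2) := by
  set E := ({x : ι → Fin 2 | ∑ i, ((x i : ℕ) : ℝ) * v i = a} : Finset _)
  have hanti : IsAntichain (· ⊆ ·) (E.image (flipSet v) : Set (Finset ι)) := by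
    refine (isAntichain_setOf_sum_eq (fun i ↦ abs_pos.mpr (hv i))
      (a - ∑ i, min (v i) 0)).subset ?_
    rw [coe_image]
    rintro _ ⟨x, hx, rfl⟩
    simp only [E, coe_filter, mem_univ, true_and, Set.mem_ofPred_eq,
      sum_mul_eq_add_sum_flipSet] at hx ⊢
    linarith
  rw [← card_image_of_injective E (flipSet_injective v)]
  exact hanti.sperner

end LittlewoodOfford

theorem cubeProb_sum_mul_eq_card_div {n : ℕ} (v : Fin n → ℝ) (a : ℝ) :
    cubeProb n {x | ∑ j, ((x j : ℕ) : ℝ) * v j = a}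
      = #{y : {j // v j ≠ 0} → Fin 2 | ∑ j, ((y j : ℕ) : ℝ) * v j = a}
        / 2 ^ Fintype.card {j // v j ≠ 0} := by
  have hcard : #{x : Fin n → Fin 2 | ∑ j, ((x j : ℕ) : ℝ) * v j = a}
      = #{y : {j // v j ≠ 0} → Fin 2 | ∑ j, ((y j : ℕ) : ℝ) * v j = a}
        * 2 ^ Fintype.card {j // ¬v j ≠ 0} := by
    have h := Fintype.card_filter_comp_restrict (β := Fin 2) (fun j ↦ v j ≠ 0)
      fun y ↦ ∑ j, ((y j : ℕ) : ℝ) * v j = a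
    rw [Fintype.card_fin] at h
    rw [← h]
    refine congrArg card (filter_congr fun x _ ↦ ?_)
    rw [sum_subtype_ne_zero_mul (fun j ↦ ((x j : ℕ) : ℝ))]
  have hn : Fintype.card {j // v j ≠ 0} + Fintype.card {j // ¬v j ≠ 0} = n := by
    rw [← Fintype.card_sum, Fintype.card_congr (Equiv.sumCompl _), Fintype.card_fin]
  have hpow : (2 : ℝ) ^ n
      = 2 ^ Fintype.card {j // v j ≠ 0} * 2 ^ Fintype.card {j // ¬v j ≠ 0} := by
    rw [← pow_add, hn]
  rw [cubeProb, Set.ncard_eq_toFinset_card', Set.toFinset_ofPred, hcard, hpow]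
  push_cast
  rw [mul_div_mul_right _ _ (by positivity)]

/-- The Littlewood–Offord Lemma: for a nonzero `v ∈ ℝ^n` and `a ∈ ℝ`, the probability
that `⟨x, v⟩ = a` for a uniformly random `x ∈ {0,1}^n` is at most `1/√|supp(v)|`. -/
theorem littlewood_offord {n : ℕ} (v : Fin n → ℝ) (hv : v ≠ 0) (a : ℝ) :
    cubeProb n {x | ∑ j, ((x j : ℕ) : ℝ) * v j = a}
      ≤ 1 / Real.sqrt ({j : Fin n | v j ≠ 0}.ncard) := by
  set s := Fintype.card {j // v j ≠ 0}
  have hsupp : {j : Fin n | v j ≠ 0}.ncard = s := by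
    rw [← Nat.card_coe_set_eq, Nat.card_eq_fintype_card]; rfl
  have hs : s ≠ 0 := by
    obtain ⟨j, hj⟩ := Function.ne_iff.mp hv
    exact (Fintype.card_pos_iff.mpr ⟨⟨j, hj⟩⟩).ne'
  rw [cubeProb_sum_mul_eq_card_div, hsupp]
  calc _ ≤ (s.choose (s / 2) : ℝ) / 2 ^ s := by
        gcongr
        exact_mod_cast card_sum_mul_eq_le_choose (fun j : {j // v j ≠ 0} ↦ j.2) a
    _ ≤ 1 / √s := Nat.choose_half_div_two_pow_le hs
end

section
/- Let v = (v₁,…,v_n) ∈ ℝ^n have ℓ₂-norm ‖v‖₂ = 1, and let C₀ ≥ 4.706. Then, for x chosen uniformly at random from {0,1}^n, ℙ( 1/C₀ ≤ |⟨x, v⟩ − (1/2)·Σ_{i=1}^n v_i| ≤ C₀ ) ≥ 1/C₀. -/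
/-!
Put `εᵢ = 2xᵢ - 1`, so that `⟨x, v⟩ - ½ ∑ vᵢ = T(x) / 2` for the Rademacher sum `T = ∑ εᵢ vᵢ`.
Summing out one sign at a time gives the moments `𝔼 T² = ‖v‖₂² = 1` and `𝔼 T⁴ ≤ 3`.
Cauchy–Schwarz applied to `T² 1_{|T| ≥ a}` (the Paley–Zygmund argument) gives
`ℙ(|T| ≥ a) ≥ (1 - a²)² / 3`, and Chebyshev gives `ℙ(|T| > b) ≤ 1 / b²`.
For `a = 2 / C₀` and `b = 2 C₀` the difference of the two bounds is at least `1 / C₀`.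
-/

open Finset

theorem Fin.sum_pi_succ {M β : Type*} [AddCommMonoid M] [Fintype β] {n : ℕ}
    (f : (Fin (n + 1) → β) → M) :
    ∑ x, f x = ∑ b : β, ∑ y : Fin n → β, f (Fin.cons b y) := by
  rw [← Equiv.sum_comp (Fin.consEquiv fun _ => β) f, Fintype.sum_prod_type]
  rfl

noncomputable def rademacher (b : Fin 2) : ℝ := 2 * (b : ℕ) - 1

noncomputable def rademacherSum {n : ℕ} (w : Fin n → ℝ) (x : Fin n → Fin 2) : ℝ :=
  ∑ j, rademacher (x j) * w j

theorem rademacherSum_cons {n : ℕ} (w : Fin (n + 1) → ℝ) (b : Fin 2) (y : Fin n → Fin 2) :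
    rademacherSum w (Fin.cons b y) = rademacher b * w 0 + rademacherSum (fun j => w j.succ) y := by
  simp [rademacherSum, Fin.sum_univ_succ]

theorem sum_rademacher_mul_add_sq (c s : ℝ) :
    ∑ b : Fin 2, (rademacher b * c + s) ^ 2 = 2 * (c ^ 2 + s ^ 2) := by
  norm_num [Fin.sum_univ_two, rademacher]
  ring

theorem sum_rademacher_mul_add_pow_four (c s : ℝ) :
    ∑ b : Fin 2, (rademacher b * c + s) ^ 4 = 2 * (c ^ 4 + 6 * c ^ 2 * s ^ 2 + s ^ 4) := by
  norm_num [Fin.sum_univ_two, rademacher]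
  ring

theorem sum_rademacherSum_sq {n : ℕ} (w : Fin n → ℝ) :
    ∑ x, rademacherSum w x ^ 2 = 2 ^ n * ∑ j, w j ^ 2 := by
  induction n with
  | zero => simp [rademacherSum]
  | succ n ih =>
    simp_rw [Fin.sum_pi_succ, rademacherSum_cons]
    rw [Finset.sum_comm]
    simp_rw [sum_rademacher_mul_add_sq]
    rw [← mul_sum, sum_add_distrib, ih, sum_const, card_univ, Fintype.card_pi, Fin.sum_univ_succ]
    simp only [prod_const, card_univ, Fintype.card_fin, nsmul_eq_mul]
    push_cast
    ring

theorem sum_rademacherSum_pow_four_le {n : ℕ} (w : Fin n → ℝ) :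
    ∑ x, rademacherSum w x ^ 4 ≤ 3 * 2 ^ n * (∑ j, w j ^ 2) ^ 2 := by
  induction n with
  | zero => simp [rademacherSum]
  | succ n ih =>
    simp_rw [Fin.sum_pi_succ, rademacherSum_cons]
    rw [Finset.sum_comm]
    simp_rw [sum_rademacher_mul_add_pow_four]
    rw [← mul_sum, sum_add_distrib, sum_add_distrib, ← mul_sum, sum_rademacherSum_sq,
      sum_const, card_univ, Fintype.card_pi, Fin.sum_univ_succ]
    simp only [prod_const, card_univ, Fintype.card_fin, nsmul_eq_mul]
    push_cast
    have hw : 0 ≤ 2 ^ n * w 0 ^ 4 := by positivity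
    linear_combination 2 * ih (fun j => w j.succ) + 4 * hw

section PaleyZygmund

variable {α : Type*} [Fintype α] (f : α → ℝ)

theorem card_lt_abs_mul_sq_le_sum_sq {b : ℝ} (hb : 0 ≤ b) :
    #{x | b < |f x|} * b ^ 2 ≤ ∑ x, f x ^ 2 := by
  calc #{x | b < |f x|} * b ^ 2 = #{x | b < |f x|} • b ^ 2 := (nsmul_eq_mul _ _).symm
    _ ≤ ∑ x with b < |f x|, f x ^ 2 := by
      refine card_nsmul_le_sum _ _ _ fun x hx => ?_
      rw [← sq_abs (f x)]
      exact pow_le_pow_left₀ hb (mem_filter.mp hx).2.le 2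
    _ ≤ ∑ x, f x ^ 2 := sum_le_sum_of_subset_of_nonneg (subset_univ _) fun _ _ _ => sq_nonneg _

theorem sum_sq_le_sum_filter_sq_add (a : ℝ) :
    ∑ x, f x ^ 2 ≤ ∑ x with a ≤ |f x|, f x ^ 2 + Fintype.card α * a ^ 2 := by
  rw [← sum_filter_add_sum_filter_not univ (a ≤ |f ·|)]
  gcongr
  calc ∑ x with ¬a ≤ |f x|, f x ^ 2 ≤ #{x | ¬a ≤ |f x|} • a ^ 2 := by
        refine sum_le_card_nsmul _ _ _ fun x hx => ?_
        rw [← sq_abs]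
        exact pow_le_pow_left₀ (abs_nonneg _) (not_le.mp (mem_filter.mp hx).2).le 2
    _ ≤ Fintype.card α * a ^ 2 := by
      rw [nsmul_eq_mul]
      gcongr
      exact_mod_cast card_filter_le _ _

theorem sq_sum_sq_le_card_mul_sum_pow_four (s : Finset α) :
    (∑ x ∈ s, f x ^ 2) ^ 2 ≤ #s * ∑ x, f x ^ 4 :=
  calc (∑ x ∈ s, f x ^ 2) ^ 2 ≤ #s * ∑ x ∈ s, (f x ^ 2) ^ 2 := sq_sum_le_card_mul_sum_sq
    _ ≤ #s * ∑ x, (f x ^ 2) ^ 2 := by gcongr; exact subset_univ s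
    _ = #s * ∑ x, f x ^ 4 := by simp_rw [← pow_mul]

theorem paley_zygmund_card {a : ℝ} (ha : Fintype.card α * a ^ 2 ≤ ∑ x, f x ^ 2) :
    (∑ x, f x ^ 2 - Fintype.card α * a ^ 2) ^ 2 ≤ #{x | a ≤ |f x|} * ∑ x, f x ^ 4 :=
  calc (∑ x, f x ^ 2 - Fintype.card α * a ^ 2) ^ 2 ≤ (∑ x with a ≤ |f x|, f x ^ 2) ^ 2 :=
        pow_le_pow_left₀ (by linarith) (by linarith [sum_sq_le_sum_filter_sq_add f a]) 2
    _ ≤ #{x | a ≤ |f x|} * ∑ x, f x ^ 4 := sq_sum_sq_le_card_mul_sum_pow_four f _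

theorem card_filter_le_card_filter_and_add_card_filter_not (p q : α → Prop)
    [DecidablePred p] [DecidablePred q] :
    #{x | p x} ≤ #{x | p x ∧ q x} + #{x | ¬q x} := by
  rw [← card_filter_add_card_filter_not (s := {x | p x}) q, filter_filter, filter_filter]
  refine Nat.add_le_add_left (card_le_card fun x hx => ?_) _
  simp only [mem_filter] at hx ⊢
  exact ⟨hx.1, hx.2.2⟩

theorem le_card_le_abs_and_abs_le [Nonempty α] {K a b : ℝ} (h2 : ∑ x, f x ^ 2 = Fintype.card α)
    (h4 : ∑ x, f x ^ 4 ≤ K * Fintype.card α) (ha : a ^ 2 ≤ 1) (hb : 0 < b) (hK : 0 < K) :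
    Fintype.card α * ((1 - a ^ 2) ^ 2 / K - 1 / b ^ 2) ≤ #{x | a ≤ |f x| ∧ |f x| ≤ b} := by
  set N : ℝ := (Fintype.card α : ℝ)
  have hN : 0 < N := by positivity
  have h_large : N * (1 - a ^ 2) ^ 2 / K ≤ #{x | a ≤ |f x|} := by
    have hpz := paley_zygmund_card f (a := a) (by nlinarith)
    rw [h2] at hpz
    rw [div_le_iff₀ hK, ← mul_le_mul_iff_of_pos_left hN]
    nlinarith [mul_le_mul_of_nonneg_left h4 (Nat.cast_nonneg #{x | a ≤ |f x|})]
  have h_huge : #{x | b < |f x|} ≤ N / b ^ 2 := by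
    rw [le_div_iff₀ (by positivity), ← h2]
    exact card_lt_abs_mul_sq_le_sum_sq f hb.le
  have h_split : (#{x | a ≤ |f x|} : ℝ) ≤ #{x | a ≤ |f x| ∧ |f x| ≤ b} + #{x | b < |f x|} := by
    simp_rw [← not_le (b := b)]
    exact_mod_cast card_filter_le_card_filter_and_add_card_filter_not _ _
  rw [mul_sub, mul_div_assoc', mul_one_div]
  linarith

end PaleyZygmund

/-- `4.706` lies just above the largest root `≈ 4.70585` of `4C⁴ - 12C³ - 35C² + 64`, which is
`12C⁴` times the difference of the two sides. -/
theorem one_div_le_paley_zygmund_sub_chebyshev {C : ℝ} (hC : 4.706 ≤ C) :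
    1 / C ≤ (1 - (2 / C) ^ 2) ^ 2 / 3 - 1 / (2 * C) ^ 2 := by
  have hC0 : 0 < C := by linarith
  have h : 0 ≤ 4 * C ^ 4 - 12 * C ^ 3 - 35 * C ^ 2 + 64 := by
    have h1 : 0 ≤ C - 4.706 := by linarith
    nlinarith [mul_nonneg (mul_nonneg h1 h1) h1, mul_nonneg h1 (sq_nonneg C),
      mul_nonneg (mul_nonneg h1 h1) hC0.le]
  rw [← sub_nonneg]
  have e : (1 - (2 / C) ^ 2) ^ 2 / 3 - 1 / (2 * C) ^ 2 - 1 / C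
      = (4 * C ^ 4 - 12 * C ^ 3 - 35 * C ^ 2 + 64) / (12 * C ^ 4) := by
    field_simp
    ring
  rw [e]
  positivity

theorem sum_mul_sub_half_sum_eq_rademacherSum_div_two {n : ℕ} (v : Fin n → ℝ)
    (x : Fin n → Fin 2) :
    ∑ j, ((x j : ℕ) : ℝ) * v j - 1 / 2 * ∑ j, v j = rademacherSum v x / 2 := by
  rw [rademacherSum, mul_sum, ← sum_sub_distrib, sum_div]
  exact sum_congr rfl fun j _ => by rw [rademacher]; ring

/-- If `v ∈ ℝ^n` has `ℓ₂`-norm `1` and `C₀ ≥ 4.706`, then for a uniformly random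
`x ∈ {0,1}^n` we have `1/C₀ ≤ |⟨x,v⟩ - (1/2)∑ᵢ vᵢ| ≤ C₀` with probability at
least `1/C₀`. -/
theorem weak_concentration {n : ℕ} (v : Fin n → ℝ)
    (hv : Real.sqrt (∑ j, v j ^ 2) = 1) (C₀ : ℝ) (hC₀ : C₀ ≥ 4.706) :
    cubeProb n {x | 1 / C₀ ≤ |∑ j, ((x j : ℕ) : ℝ) * v j - (1 / 2) * ∑ j, v j| ∧
        |∑ j, ((x j : ℕ) : ℝ) * v j - (1 / 2) * ∑ j, v j| ≤ C₀}
      ≥ 1 / C₀ := by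
  have hC : 0 < C₀ := by linarith
  have hv2 : ∑ j, v j ^ 2 = 1 := Real.sqrt_eq_one.mp hv
  have hcard : (Fintype.card (Fin n → Fin 2) : ℝ) = 2 ^ n := by simp
  have hbound := le_card_le_abs_and_abs_le (rademacherSum v) (K := 3) (a := 2 / C₀) (b := 2 * C₀)
    (by rw [sum_rademacherSum_sq, hv2, hcard, mul_one])
    (by simpa [hv2, hcard, mul_comm] using sum_rademacherSum_pow_four_le v)
    (by rw [div_pow, div_le_one (by positivity)]; nlinarith) (by positivity) three_pos
  have hevent : {x : Fin n → Fin 2 |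
      1 / C₀ ≤ |∑ j, ((x j : ℕ) : ℝ) * v j - (1 / 2) * ∑ j, v j| ∧
        |∑ j, ((x j : ℕ) : ℝ) * v j - (1 / 2) * ∑ j, v j| ≤ C₀} =
      ↑({x | 2 / C₀ ≤ |rademacherSum v x| ∧ |rademacherSum v x| ≤ 2 * C₀} :
        Finset (Fin n → Fin 2)) := by
    ext x
    simp only [Set.mem_ofPred_eq, coe_filter, mem_univ, true_and,
      sum_mul_sub_half_sum_eq_rademacherSum_div_two, abs_div, abs_two]
    rw [div_le_div_iff₀ hC two_pos, div_le_iff₀ two_pos, div_le_iff₀ hC, one_mul, mul_comm C₀]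
  rw [cubeProb, hevent, Set.ncard_coe_finset, ge_iff_le, le_div_iff₀ (by positivity), ← hcard]
  nlinarith [one_div_le_paley_zygmund_sub_chebyshev hC₀]
end

section
/- There is a constant C₂ > 1 such that the following holds. If v ∈ ℝ^n has S scales and the size of the smallest scale is δ > 0, then for every a ∈ ℝ and every b ≥ 2, for x chosen uniformly at random from {0,1}^n, ℙ( |⟨x, v⟩ − a| < b·δ ) < C₂ · exp( −S/C₂ + C₂·log b ). -/
open Finset

/-- The `ℓ₂`-norm of the restriction of `v` to the coordinates in `P`. -/
noncomputable def scaleNorm {n : ℕ} (v : Fin n → ℝ) (P : Finset (Fin n)) : ℝ :=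
  Real.sqrt (∑ j ∈ P, v j ^ 2)

/-- The vector `v` has `S` scales on the coordinate set `A`, witnessed by the
partition `A = P 0 ∪ … ∪ P (S-1)`: `‖v^(s)‖₂ ≥ C₁ ‖v^(s+1)‖₂` for every `s < S - 1`,
where `C₁ = 4 · 4.706²`. The smallest scale is `v^(S-1)`, its position is `P (S-1)`
and its size is `scaleNorm v (P (S-1))`. -/
def HasScalesOn {n : ℕ} (v : Fin n → ℝ) (A : Finset (Fin n)) (S : ℕ)
    (P : ℕ → Finset (Fin n)) : Prop :=
  (∀ s < S, P s ⊆ A) ∧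
  (∀ j ∈ A, ∃! s : ℕ, s < S ∧ j ∈ P s) ∧
  (∀ s : ℕ, s + 1 < S →
    scaleNorm v (P s) ≥ (4 * (4.706 : ℝ) ^ 2) * scaleNorm v (P (s + 1)))

open scoped BigOperators

/-!
Write `⟨x, v⟩ - a` as `∑ₛ Wₛ(x) - a'`, where `Wₛ` is the centred sum over the `s`-th scale, of
variance `‖v^(s)‖²/4`. Given the coarser scales, a scale with `‖v^(s)‖ ≥ 8bδ` can meet the window
only if `Wₛ` lies in a fixed interval of radius `‖v^(s)‖/4` — an event of probability at most
`29/32` by Paley–Zygmund and symmetry — unless some finer scale `u` deviates by more than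
`4 · 2^(u-s) ‖v^(u)‖`. Charging each such failure to the deviating scale, the indicator of the
event is dominated by a product of one weight per scale, each depending only on the scales up to
it, with conditional mean at most `39/40` (fourth-moment bounds), or at most `1 + 3/4096` if the
scale is smaller than `8bδ`. Revealing the scales one by one gives the bound `(39/40)^S · 4^k`,
where `k = O(log b)` counts the scales smaller than `8bδ`.
-/

section Cube

variable {ι : Type*}

noncomputable def centeredSum (c : ι → ℝ) (D : Finset ι) (x : ι → Fin 2) : ℝ :=
  ∑ j ∈ D, (((x j : ℕ) : ℝ) - 1 / 2) * c j

lemma sq_fin_two_sub_half (b : Fin 2) : (((b : ℕ) : ℝ) - 1 / 2) ^ 2 = 1 / 4 := by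
  fin_cases b <;> norm_num

lemma cast_one_sub_sub_half (b : Fin 2) :
    (((1 - b : Fin 2) : ℕ) : ℝ) - 1 / 2 = -(((b : ℕ) : ℝ) - 1 / 2) := by
  fin_cases b <;> norm_num

lemma centeredSum_flip (c : ι → ℝ) (D : Finset ι) (x : ι → Fin 2) :
    centeredSum c D (fun i => 1 - x i) = -centeredSum c D x := by
  simp only [centeredSum, cast_one_sub_sub_half, neg_mul, sum_neg_distrib]

variable [DecidableEq ι]

lemma centeredSum_update_of_notMem {c : ι → ℝ} {D : Finset ι} {j : ι} (hj : j ∉ D)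
    (x : ι → Fin 2) (b : Fin 2) : centeredSum c D (Function.update x j b) = centeredSum c D x :=
  sum_congr rfl fun i hi => by rw [Function.update_of_ne (ne_of_mem_of_not_mem hi hj)]

lemma centeredSum_insert {c : ι → ℝ} {D : Finset ι} {j : ι} (hj : j ∉ D) (x : ι → Fin 2) :
    centeredSum c (insert j D) x = (((x j : ℕ) : ℝ) - 1 / 2) * c j + centeredSum c D x :=
  sum_insert hj

lemma centeredSum_piecewise_of_disjoint {c : ι → ℝ} {Q D : Finset ι} (h : Disjoint Q D)
    (z x : ι → Fin 2) : centeredSum c D (Q.piecewise z x) = centeredSum c D x :=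
  sum_congr rfl fun j hj => by rw [piecewise_eq_of_notMem _ _ _ (disjoint_right.mp h hj)]

lemma centeredSum_piecewise_self (c : ι → ℝ) (Q : Finset ι) (z x : ι → Fin 2) :
    centeredSum c Q (Q.piecewise z x) = centeredSum c Q z :=
  sum_congr rfl fun j hj => by rw [piecewise_eq_of_mem _ _ _ hj]

variable [Fintype ι]

lemma expect_coord_sub_half_mul_eq_zero (j : ι) {G : (ι → Fin 2) → ℝ}
    (hG : ∀ x b, G (Function.update x j b) = G x) :
    𝔼 x, (((x j : ℕ) : ℝ) - 1 / 2) * G x = 0 := by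
  have hflip : Function.Involutive fun x : ι → Fin 2 => Function.update x j (1 - x j) := by
    intro x
    ext i
    rcases eq_or_ne i j with rfl | hi
    · simp
    · simp [Function.update_of_ne hi]
  have h := Fintype.expect_equiv (hflip.toPerm _)
    (fun x => (((x j : ℕ) : ℝ) - 1 / 2) * G x) (fun x => -((((x j : ℕ) : ℝ) - 1 / 2) * G x))
    (fun x => by
      simp only [Function.Involutive.coe_toPerm, Function.update_self, hG, cast_one_sub_sub_half]
      ring)
  rw [Finset.expect_neg_distrib] at h
  linarith

lemma expect_centeredSum_sq (c : ι → ℝ) (D : Finset ι) :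
    𝔼 x, centeredSum c D x ^ 2 = (∑ j ∈ D, c j ^ 2) / 4 := by
  induction D using Finset.induction_on with
  | empty => simp [centeredSum]
  | insert j D hj ih =>
    have hexp : ∀ x, centeredSum c (insert j D) x ^ 2 = c j ^ 2 / 4 +
        2 * c j * ((((x j : ℕ) : ℝ) - 1 / 2) * centeredSum c D x) + centeredSum c D x ^ 2 := by
      intro x
      rw [centeredSum_insert hj]
      linear_combination c j ^ 2 * sq_fin_two_sub_half (x j)
    simp_rw [hexp, expect_add_distrib, ← mul_expect,
      expect_coord_sub_half_mul_eq_zero j (centeredSum_update_of_notMem hj),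
      Fintype.expect_const, ih, sum_insert hj]
    ring

lemma expect_centeredSum_pow_four_le (c : ι → ℝ) (D : Finset ι) :
    𝔼 x, centeredSum c D x ^ 4 ≤ 3 * ((∑ j ∈ D, c j ^ 2) / 4) ^ 2 := by
  induction D using Finset.induction_on with
  | empty => simp [centeredSum]
  | insert j D hj ih =>
    have hexp : ∀ x, centeredSum c (insert j D) x ^ 4 = c j ^ 4 / 16 +
        3 / 2 * c j ^ 2 * centeredSum c D x ^ 2 + centeredSum c D x ^ 4 +
        (((x j : ℕ) : ℝ) - 1 / 2) *
          (c j ^ 3 * centeredSum c D x + 4 * c j * centeredSum c D x ^ 3) := by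
      intro x
      rw [centeredSum_insert hj]
      set e := ((x j : ℕ) : ℝ) - 1 / 2
      linear_combination ((e ^ 2 + 1 / 4) * c j ^ 4 + 4 * e * c j ^ 3 * centeredSum c D x
        + 6 * c j ^ 2 * centeredSum c D x ^ 2) * sq_fin_two_sub_half (x j)
    have hodd := expect_coord_sub_half_mul_eq_zero (G := fun x =>
      c j ^ 3 * centeredSum c D x + 4 * c j * centeredSum c D x ^ 3) j
      (fun x b => by simp only [centeredSum_update_of_notMem hj])
    simp_rw [hexp, expect_add_distrib, ← mul_expect, hodd, Fintype.expect_const,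
      expect_centeredSum_sq, sum_insert hj]
    have hq : 0 ≤ ∑ i ∈ D, c i ^ 2 := sum_nonneg fun i _ => sq_nonneg _
    nlinarith [sq_nonneg (c j ^ 2), mul_nonneg (sq_nonneg (c j)) hq]

noncomputable def deviationWeight (W r : ℝ) : ℝ := 1 + (W / (4 * r)) ^ 4

noncomputable def pinWeight (W t r : ℝ) : ℝ := (if |W - t| < r / 4 then 1 else 0) + 1 / 16

variable {c : ι → ℝ} {D : Finset ι} {r : ℝ}

lemma one_le_deviationWeight (W r : ℝ) : 1 ≤ deviationWeight W r :=
  le_add_of_nonneg_right (by positivity)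

lemma pow_le_deviationWeight {W r : ℝ} (hr : 0 < r) {d : ℕ} (h : 4 * 2 ^ d * r < |W|) :
    16 ^ d ≤ deviationWeight W r := by
  have h2 : (2 : ℝ) ^ d ≤ |W| / (4 * r) := by rw [le_div_iff₀ (by positivity)]; linarith
  calc (16 : ℝ) ^ d = ((2 : ℝ) ^ d) ^ 4 := by rw [← pow_mul, mul_comm, pow_mul]; norm_num
    _ ≤ (|W| / (4 * r)) ^ 4 := by gcongr
    _ = (W / (4 * r)) ^ 4 := by
        rw [div_pow, div_pow, Even.pow_abs ⟨2, rfl⟩]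
    _ ≤ deviationWeight W r := le_add_of_nonneg_left zero_le_one

lemma expect_deviationWeight_le (hr : r ^ 2 = ∑ j ∈ D, c j ^ 2) (hr0 : 0 < r) :
    𝔼 x, deviationWeight (centeredSum c D x) r ≤ 1 + 3 / 4096 := by
  have h4 := expect_centeredSum_pow_four_le c D
  rw [← hr] at h4
  simp_rw [deviationWeight, expect_add_distrib, Fintype.expect_const, div_pow, ← expect_div]
  rw [add_le_add_iff_left, div_le_iff₀ (by positivity)]
  nlinarith [pow_pos hr0 4]

lemma expect_abs_centeredSum_lt_le (hr : r ^ 2 = ∑ j ∈ D, c j ^ 2) (hr0 : 0 < r) :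
    𝔼 x, (if |centeredSum c D x| < r / 4 then 1 else 0 : ℝ) ≤ 13 / 16 := by
  have h2 := expect_centeredSum_sq c D
  have h4 := expect_centeredSum_pow_four_le c D
  rw [← hr] at h2 h4
  -- Paley–Zygmund: `W² ≤ r²/16` where `|W| < r/4`, and `2 r² W² ≤ W⁴ + r⁴` elsewhere.
  have hpt : ∀ x, centeredSum c D x ^ 2 ≤ r ^ 2 / 16 + centeredSum c D x ^ 4 / (2 * r ^ 2)
      + r ^ 2 / 2 * (1 - if |centeredSum c D x| < r / 4 then 1 else 0) := by
    intro x
    set W := centeredSum c D x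
    have hW4 : 0 ≤ W ^ 4 / (2 * r ^ 2) := by positivity
    split_ifs with h
    · have : W ^ 2 < (r / 4) ^ 2 := by
        rw [← sq_abs]; exact pow_lt_pow_left₀ h (abs_nonneg _) two_ne_zero
      nlinarith
    · have hq : W ^ 4 / (2 * r ^ 2) * (2 * r ^ 2) = W ^ 4 := div_mul_cancel₀ _ (by positivity)
      nlinarith [sq_nonneg (W ^ 2 - r ^ 2), pow_pos hr0 2]
  have := expect_le_expect (s := univ) fun x _ => hpt x
  simp_rw [expect_add_distrib, ← mul_expect, expect_sub_distrib, Fintype.expect_const,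
    ← expect_div, h2] at this
  have h4' : (𝔼 x, centeredSum c D x ^ 4) / (2 * r ^ 2) ≤ 3 * r ^ 2 / 32 := by
    rw [div_le_iff₀ (by positivity)]
    nlinarith
  nlinarith [pow_pos hr0 2]

lemma expect_abs_centeredSum_sub_lt_le (hr : r ^ 2 = ∑ j ∈ D, c j ^ 2) (hr0 : 0 < r) (t : ℝ) :
    𝔼 x, (if |centeredSum c D x - t| < r / 4 then 1 else 0 : ℝ) ≤ 29 / 32 := by
  -- Flipping every coordinate negates the sum; an interval of radius `r/4` and its mirror image
  -- can only both contain points of `(-r/4, r/4)`.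
  have hflip : 𝔼 x, (if |centeredSum c D x - t| < r / 4 then 1 else 0 : ℝ)
      = 𝔼 x, (if |centeredSum c D x + t| < r / 4 then 1 else 0 : ℝ) := by
    refine Fintype.expect_equiv (Equiv.piCongrRight fun _ => Equiv.subLeft 1) _ _ fun x => ?_
    have : (Equiv.piCongrRight fun _ => Equiv.subLeft (1 : Fin 2)) x = fun i => 1 - x i := rfl
    rw [this, centeredSum_flip, ← abs_neg]
    ring_nf
  have hpt : ∀ x, (if |centeredSum c D x - t| < r / 4 then 1 else 0 : ℝ)
      + (if |centeredSum c D x + t| < r / 4 then 1 else 0)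
      ≤ 1 + if |centeredSum c D x| < r / 4 then 1 else 0 := by
    intro x
    split_ifs with h₁ h₂ h₀ <;> norm_num
    rw [abs_lt] at h₁ h₂
    exact h₀ (abs_lt.mpr ⟨by linarith, by linarith⟩)
  have := expect_le_expect (s := univ) fun x _ => hpt x
  rw [expect_add_distrib, expect_add_distrib, Fintype.expect_const, ← hflip] at this
  linarith [expect_abs_centeredSum_lt_le hr hr0]

lemma expect_deviationWeight_mul_pinWeight_le (hr : r ^ 2 = ∑ j ∈ D, c j ^ 2) (hr0 : 0 < r)
    (t : ℝ) :
    𝔼 x, deviationWeight (centeredSum c D x) r * pinWeight (centeredSum c D x) t r ≤ 39 / 40 := by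
  have hpt : ∀ x, deviationWeight (centeredSum c D x) r * pinWeight (centeredSum c D x) t r
      ≤ (if |centeredSum c D x - t| < r / 4 then 1 else 0)
        + (deviationWeight (centeredSum c D x) r - 1)
        + deviationWeight (centeredSum c D x) r / 16 := by
    intro x
    have := one_le_deviationWeight (centeredSum c D x) r
    unfold pinWeight
    split_ifs <;> nlinarith
  have := expect_le_expect (s := univ) fun x _ => hpt x
  simp_rw [expect_add_distrib, expect_sub_distrib, ← expect_div, Fintype.expect_const] at this
  linarith [expect_abs_centeredSum_sub_lt_le hr hr0 t, expect_deviationWeight_le hr hr0]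

end Cube

section Resampling

variable {ι α : Type*} [Fintype ι] [DecidableEq ι] [Fintype α] [Nonempty α]

lemma expect_expect_piecewise (Q : Finset ι) (h : (ι → α) → ℝ) :
    𝔼 x, 𝔼 z, h (Q.piecewise z x) = 𝔼 x, h x := by
  -- Exchanging the `Q`-coordinates of `x` and `z` is an involution of pairs.
  have hswap : Function.Involutive fun p : (ι → α) × (ι → α) =>
      (Q.piecewise p.2 p.1, Q.piecewise p.1 p.2) := by
    intro p
    ext i <;> by_cases hi : i ∈ Q <;> simp [hi]
  calc 𝔼 x, 𝔼 z, h (Q.piecewise z x)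
      = 𝔼 p : (ι → α) × (ι → α), h (Q.piecewise p.2 p.1) := by
        rw [← univ_product_univ]
        exact (expect_product' _ _ fun x z => h (Q.piecewise z x)).symm
    _ = 𝔼 p : (ι → α) × (ι → α), h p.1 :=
        Fintype.expect_equiv (hswap.toPerm _) _ _ fun p => rfl
    _ = 𝔼 x, h x := by
        rw [← univ_product_univ, expect_product' _ _ fun x (_ : ι → α) => h x]
        simp only [Fintype.expect_const]

theorem expect_prod_le_prod_of_resampling (Q : ℕ → Finset ι) (f : ℕ → (ι → α) → ℝ)
    (p : ℕ → ℝ) (m : ℕ) (hf : ∀ i < m, ∀ x, 0 ≤ f i x)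
    (hinv : ∀ i k, i < k → k < m → ∀ x z, f i ((Q k).piecewise z x) = f i x)
    (hcond : ∀ i < m, ∀ x, 𝔼 z, f i ((Q i).piecewise z x) ≤ p i) :
    𝔼 x, ∏ i ∈ range m, f i x ≤ ∏ i ∈ range m, p i := by
  induction m with
  | zero => simp
  | succ m ih =>
    have hF : ∀ x z, ∏ i ∈ range m, f i ((Q m).piecewise z x) = ∏ i ∈ range m, f i x :=
      fun x z => prod_congr rfl fun i hi => hinv i m (mem_range.mp hi) m.lt_succ_self x z
    have hpm : 0 ≤ p m := by
      obtain ⟨x⟩ : Nonempty (ι → α) := inferInstance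
      exact (expect_nonneg fun z _ => hf m m.lt_succ_self _).trans (hcond m m.lt_succ_self x)
    calc 𝔼 x, ∏ i ∈ range (m + 1), f i x
        = 𝔼 x, (∏ i ∈ range m, f i x) * 𝔼 z, f m ((Q m).piecewise z x) := by
          simp_rw [prod_range_succ, ← expect_expect_piecewise (Q m)
            (fun x => (∏ i ∈ range m, f i x) * f m x), hF, mul_expect]
      _ ≤ 𝔼 x, (∏ i ∈ range m, f i x) * p m :=
          expect_le_expect fun x _ => mul_le_mul_of_nonneg_left
            (hcond m m.lt_succ_self x) (prod_nonneg fun i hi => hf i (by simp at hi; omega) x)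
      _ ≤ ∏ i ∈ range (m + 1), p i := by
          rw [← expect_mul, prod_range_succ]
          refine mul_le_mul_of_nonneg_right (ih (fun i hi => hf i (by omega))
            (fun i k hik hk => hinv i k hik (by omega)) (fun i hi => hcond i (by omega))) hpm

end Resampling

section Scales

variable {S : ℕ} {w : ℕ → ℝ}

lemma pow_mul_le_of_forall_mul_le {C : ℝ} (hC : 0 ≤ C) (h : ∀ s, s + 1 < S → C * w (s + 1) ≤ w s)
    {s u : ℕ} (hsu : s ≤ u) (hu : u < S) : C ^ (u - s) * w u ≤ w s := by
  obtain ⟨d, rfl⟩ := Nat.exists_eq_add_of_le hsu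
  induction d with
  | zero => simp
  | succ d ih =>
    calc C ^ (s + (d + 1) - s) * w (s + (d + 1))
        = C ^ d * (C * w (s + d + 1)) := by rw [Nat.add_sub_cancel_left, pow_succ]; ring_nf
      _ ≤ C ^ d * w (s + d) := mul_le_mul_of_nonneg_left (h _ (by omega)) (pow_nonneg hC d)
      _ ≤ w s := by simpa using ih (by omega) (by omega)

lemma sum_Ico_pow_sub_le {r : ℝ} (h0 : 0 ≤ r) (h1 : r < 1) (s S : ℕ) :
    ∑ u ∈ Ico (s + 1) S, r ^ (u - s) ≤ r / (1 - r) := by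
  rw [sum_Ico_eq_sum_range]
  simp_rw [show ∀ k, s + 1 + k - s = k + 1 by omega, pow_succ, ← sum_mul, range_eq_Ico]
  rw [mul_comm, div_eq_mul_one_div r]
  exact mul_le_mul_of_nonneg_left (by simpa using geom_sum_Ico_le_of_lt_one (m := 0) h0 h1) h0

lemma abs_sub_sub_sum_range_lt {W : ℕ → ℝ} {a ε : ℝ} {s : ℕ} (hs : s < S)
    (hdecay : ∀ s, s + 1 < S → 88 * w (s + 1) ≤ w s) (hε : 8 * ε ≤ w s)
    (hsum : |∑ u ∈ range S, W u - a| < ε)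
    (htail : ∀ u ∈ Ico (s + 1) S, |W u| ≤ 4 * 2 ^ (u - s) * w u) :
    |W s - (a - ∑ u ∈ range s, W u)| < w s / 4 := by
  have hsplit : W s - (a - ∑ u ∈ range s, W u)
      = (∑ u ∈ range S, W u - a) - ∑ u ∈ Ico (s + 1) S, W u := by
    rw [← sum_range_add_sum_Ico _ hs.le, sum_eq_sum_Ico_succ_bot hs]
    ring
  have hterm : ∀ u ∈ Ico (s + 1) S, |W u| ≤ 4 * w s * (1 / 44) ^ (u - s) := by
    intro u hu
    have hu' := mem_Ico.mp hu
    have hdec := pow_mul_le_of_forall_mul_le (by norm_num) hdecay (s := s) (u := u) (by omega) hu'.2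
    calc |W u| ≤ 4 * 2 ^ (u - s) * w u := htail u hu
      _ = 4 * (1 / 44) ^ (u - s) * (88 ^ (u - s) * w u) := by
          rw [mul_assoc 4 ((1 / 44) ^ (u - s)), ← mul_assoc ((1 / 44) ^ (u - s)), ← mul_pow]
          norm_num [mul_assoc]
      _ ≤ 4 * (1 / 44) ^ (u - s) * w s := by gcongr
      _ = 4 * w s * (1 / 44) ^ (u - s) := by ring
  have hgeom := sum_Ico_pow_sub_le (r := 1 / 44) (by norm_num) (by norm_num) s S
  have hws : 0 ≤ w s := by linarith [(abs_nonneg _).trans_lt hsum]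
  calc |W s - (a - ∑ u ∈ range s, W u)|
      ≤ |∑ u ∈ range S, W u - a| + ∑ u ∈ Ico (s + 1) S, |W u| := by
        rw [hsplit]; exact (abs_sub _ _).trans (add_le_add_right (abs_sum_le_sum_abs _ _) _)
    _ < w s / 8 + 4 * w s * (1 / 43) := by
        refine add_lt_add_of_lt_of_le (by linarith) ((sum_le_sum hterm).trans ?_)
        rw [← mul_sum]
        exact mul_le_mul_of_nonneg_left (hgeom.trans_eq (by norm_num)) (by positivity)
    _ ≤ w s / 4 := by linarith

lemma pow_card_le_of_subset_range {a R : ℝ} (ha : 1 ≤ a) (hR : 1 ≤ R) {B : Finset ℕ} {N : ℕ}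
    (hB : B ⊆ range N) (h : ∀ s ∈ B, a ^ (N - s) ≤ R) : a ^ B.card ≤ R := by
  rcases B.eq_empty_or_nonempty with rfl | hne
  · simpa using hR
  have hmin := B.min'_mem hne
  have hcard : B.card ≤ N - B.min' hne := by
    calc B.card ≤ (Ico (B.min' hne) N).card :=
          card_le_card fun s hs => mem_Ico.mpr ⟨B.min'_le s hs, mem_range.mp (hB hs)⟩
      _ = N - B.min' hne := Nat.card_Ico _ _
  exact (pow_le_pow_right₀ ha hcard).trans (h _ hmin)

lemma pow_card_le_prod {a : ℝ} (ha : 1 ≤ a) {R : ℕ → ℝ} (hR : ∀ u, 1 ≤ R u) {U : Finset ℕ}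
    (hU : ∀ s ∈ U, ∃ u ∈ Ico (s + 1) S, a ^ (u - s) ≤ R u) :
    a ^ U.card ≤ ∏ u ∈ range S, R u := by
  classical
  set B : ℕ → Finset ℕ := fun u => (range u).filter fun s => a ^ (u - s) ≤ R u
  have hUB : U ⊆ (range S).biUnion B := by
    intro s hs
    obtain ⟨u, hu, hau⟩ := hU s hs
    have hu' := mem_Ico.mp hu
    exact mem_biUnion.mpr ⟨u, mem_range.mpr hu'.2, mem_filter.mpr ⟨mem_range.mpr (by omega), hau⟩⟩
  calc a ^ U.card ≤ a ^ ∑ u ∈ range S, (B u).card :=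
        pow_le_pow_right₀ ha ((card_le_card hUB).trans card_biUnion_le)
    _ = ∏ u ∈ range S, a ^ (B u).card := (prod_pow_eq_pow_sum _ _ _).symm
    _ ≤ ∏ u ∈ range S, R u :=
        prod_le_prod (fun _ _ => by positivity) fun u _ =>
          pow_card_le_of_subset_range ha (hR u) (filter_subset _ _) fun s hs => (mem_filter.mp hs).2

lemma one_le_prod_deviationWeight_mul_pinWeight {W : ℕ → ℝ} {a ε : ℝ} {G : Finset ℕ}
    (hG : G ⊆ range S)
    (hw : ∀ s < S, 0 < w s) (hdecay : ∀ s, s + 1 < S → 88 * w (s + 1) ≤ w s)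
    (hGε : ∀ s ∈ G, 8 * ε ≤ w s) (hsum : |∑ u ∈ range S, W u - a| < ε) :
    1 ≤ ∏ s ∈ range S, deviationWeight (W s) (w s) *
      (if s ∈ G then pinWeight (W s) (a - ∑ u ∈ range s, W u) (w s) else 1) := by
  classical
  set U := G.filter fun s => w s / 4 ≤ |W s - (a - ∑ u ∈ range s, W u)|
  -- A good scale that is not pinned is witnessed by an unusually large later scale.
  have hdev : (16 : ℝ) ^ U.card ≤ ∏ s ∈ range S, deviationWeight (W s) (w s) := by
    refine pow_card_le_prod (by norm_num) (fun u => one_le_deviationWeight _ _) fun s hs => ?_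
    obtain ⟨hsG, hfar⟩ := mem_filter.mp hs
    by_contra! hnear
    refine hfar.not_gt (abs_sub_sub_sum_range_lt (mem_range.mp (hG hsG)) hdecay (hGε s hsG) hsum
      fun u hu => ?_)
    by_contra! hu'
    exact (hnear u hu).not_ge (pow_le_deviationWeight (hw u (mem_Ico.mp hu).2) hu')
  have hpin : (1 / 16 : ℝ) ^ U.card ≤ ∏ s ∈ range S,
      (if s ∈ G then pinWeight (W s) (a - ∑ u ∈ range s, W u) (w s) else 1) := by
    calc (1 / 16 : ℝ) ^ U.card = ∏ s ∈ range S, if s ∈ U then 1 / 16 else 1 := by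
          rw [prod_ite_mem, prod_const, inter_eq_right.mpr ((filter_subset _ _).trans hG)]
      _ ≤ _ := prod_le_prod (fun _ _ => by split_ifs <;> norm_num) fun s _ => by
          unfold pinWeight
          by_cases hsG : s ∈ G <;> by_cases hnear : |W s - (a - ∑ u ∈ range s, W u)| < w s / 4 <;>
            simp [U, hsG, hnear, not_le.mpr, le_of_not_gt]
  rw [prod_mul_distrib]
  calc (1 : ℝ) = 16 ^ U.card * (1 / 16) ^ U.card := by rw [← mul_pow]; norm_num
    _ ≤ _ := mul_le_mul hdev hpin (by positivity)
        (prod_nonneg fun _ _ => zero_le_one.trans (one_le_deviationWeight _ _))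

lemma four_pow_card_filter_lt_le {T δ : ℝ} (hT : 1 ≤ 4 * T) (hδ : 0 < δ)
    (hdecay : ∀ s, s + 1 < S → 88 * w (s + 1) ≤ w s) (hδS : δ ≤ w (S - 1)) :
    (4 : ℝ) ^ ((range S).filter fun s => w s < T * δ).card ≤ 4 * T := by
  refine pow_card_le_of_subset_range (by norm_num) hT (filter_subset _ _) fun s hs => ?_
  obtain ⟨hsS, hlt⟩ := mem_filter.mp hs
  have hsS := mem_range.mp hsS
  have hdec := pow_mul_le_of_forall_mul_le (by norm_num) hdecay (s := s) (u := S - 1)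
    (by omega) (by omega)
  have h88 : (88 : ℝ) ^ (S - 1 - s) < T :=
    lt_of_mul_lt_mul_right ((mul_le_mul_of_nonneg_left hδS (by positivity)).trans hdec
      |>.trans_lt hlt) hδ.le
  calc (4 : ℝ) ^ (S - s) = 4 * 4 ^ (S - 1 - s) := by rw [← pow_succ']; congr 1; omega
    _ ≤ 4 * 88 ^ (S - 1 - s) := by gcongr; norm_num
    _ ≤ 4 * T := by linarith

end Scales

section Blocks

variable {ι : Type*} [Fintype ι] [DecidableEq ι]

theorem expect_abs_sum_centeredSum_sub_lt_le (c : ι → ℝ) (Q : ℕ → Finset ι) (w : ℕ → ℝ) {S : ℕ}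
    (hQ : ∀ s k, s < k → k < S → Disjoint (Q s) (Q k))
    (hw : ∀ s < S, 0 < w s ∧ w s ^ 2 = ∑ j ∈ Q s, c j ^ 2)
    (hdecay : ∀ s, s + 1 < S → 88 * w (s + 1) ≤ w s) (a ε : ℝ) :
    𝔼 x, (if |∑ s ∈ range S, centeredSum c (Q s) x - a| < ε then 1 else 0 : ℝ)
      ≤ (39 / 40) ^ S * 4 ^ ((range S).filter fun s => w s < 8 * ε).card := by
  set G := (range S).filter fun s => 8 * ε ≤ w s
  set f : ℕ → (ι → Fin 2) → ℝ := fun s x =>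
    deviationWeight (centeredSum c (Q s) x) (w s) * (if s ∈ G then
      pinWeight (centeredSum c (Q s) x) (a - ∑ u ∈ range s, centeredSum c (Q u) x) (w s) else 1)
  have hf : ∀ s x, 0 ≤ f s x := fun s x =>
    mul_nonneg (zero_le_one.trans (one_le_deviationWeight _ _))
      (by unfold pinWeight; split_ifs <;> norm_num)
  have hpast : ∀ s k, s ≤ k → k < S → ∀ x z,
      ∑ u ∈ range s, centeredSum c (Q u) ((Q k).piecewise z x)
        = ∑ u ∈ range s, centeredSum c (Q u) x := fun s k hsk hk x z =>
    sum_congr rfl fun u hu =>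
      centeredSum_piecewise_of_disjoint (hQ u k (by simp at hu; omega) hk).symm z x
  have hinv : ∀ i k, i < k → k < S → ∀ x z, f i ((Q k).piecewise z x) = f i x := by
    intro i k hik hk x z
    simp only [f, hpast i k hik.le hk, centeredSum_piecewise_of_disjoint (hQ i k hik hk).symm]
  have hcond : ∀ s < S, ∀ x, 𝔼 z, f s ((Q s).piecewise z x)
      ≤ 39 / 40 * (if w s < 8 * ε then 4 else 1) := by
    intro s hs x
    simp only [f, hpast s s le_rfl hs, centeredSum_piecewise_self]
    by_cases hsG : s ∈ G
    · have : ¬w s < 8 * ε := not_lt.mpr (mem_filter.mp hsG).2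
      simpa [hsG, this] using
        expect_deviationWeight_mul_pinWeight_le (hw s hs).2 (hw s hs).1 _
    · have : w s < 8 * ε := by simpa [G, hs] using hsG
      simp only [hsG, this, if_false, if_true, mul_one]
      linarith [expect_deviationWeight_le (hw s hs).2 (hw s hs).1]
  calc _ ≤ 𝔼 x, ∏ s ∈ range S, f s x := expect_le_expect fun x _ => by
          split_ifs with h
          · exact one_le_prod_deviationWeight_mul_pinWeight (filter_subset _ _)
              (fun s hs => (hw s hs).1) hdecay (fun s hs => (mem_filter.mp hs).2) h
          · exact prod_nonneg fun s _ => hf s x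
    _ ≤ ∏ s ∈ range S, 39 / 40 * (if w s < 8 * ε then 4 else 1) :=
        expect_prod_le_prod_of_resampling Q f _ S (fun s _ => hf s) hinv hcond
    _ = _ := by
        rw [prod_mul_distrib, prod_const, card_range, prod_ite, prod_const, prod_const_one,
          mul_one]

end Blocks

lemma cubeProb_eq_expect (n : ℕ) (E : Set (Fin n → Fin 2)) [DecidablePred (· ∈ E)] :
    cubeProb n E = 𝔼 x, if x ∈ E then 1 else 0 := by
  rw [cubeProb, Fintype.expect_eq_sum_div_card, sum_boole, Fintype.card_fun, Fintype.card_fin,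
    Fintype.card_fin, Set.ncard_eq_toFinset_card', ← Set.filter_mem_univ_eq_toFinset]
  push_cast
  rfl

lemma pow_mul_lt_exp_neg_add_log {b : ℝ} (hb : 2 ≤ b) (S : ℕ) :
    (39 / 40) ^ S * (4 * (8 * b)) < 40 * Real.exp (-(S : ℝ) / 40 + 40 * Real.log b) := by
  have hdecay : (39 / 40 : ℝ) ^ S ≤ Real.exp (-(S : ℝ) / 40) := by
    calc (39 / 40 : ℝ) ^ S ≤ Real.exp (-1 / 40) ^ S := by
          gcongr; linarith [Real.add_one_le_exp (-1 / 40 : ℝ)]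
      _ = Real.exp (-(S : ℝ) / 40) := by rw [← Real.exp_nat_mul]; ring_nf
  have hpow : Real.exp (40 * Real.log b) = b ^ 40 := by
    rw [show (40 : ℝ) * Real.log b = ((40 : ℕ) : ℝ) * Real.log b by norm_num, ← Real.log_pow,
      Real.exp_log (by positivity)]
  have hb40 : b ≤ b ^ 40 := le_self_pow₀ (by linarith) (by norm_num)
  rw [Real.exp_add, hpow]
  calc (39 / 40 : ℝ) ^ S * (4 * (8 * b)) ≤ Real.exp (-(S : ℝ) / 40) * (32 * b) := by
        rw [show (4 : ℝ) * (8 * b) = 32 * b by ring]; gcongr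
    _ < 40 * (Real.exp (-(S : ℝ) / 40) * b ^ 40) := by
        nlinarith [Real.exp_pos (-(S : ℝ) / 40)]

namespace HasScalesOn

variable {n S : ℕ} {v : Fin n → ℝ} {P : ℕ → Finset (Fin n)}

lemma disjoint (h : HasScalesOn v univ S P) {s k : ℕ} (hsk : s < k) (hk : k < S) :
    Disjoint (P s) (P k) :=
  disjoint_left.mpr fun {j} hjs hjk =>
    hsk.ne ((h.2.1 j (mem_univ j)).unique ⟨hsk.trans hk, hjs⟩ ⟨hk, hjk⟩)

lemma sum_centeredSum (h : HasScalesOn v univ S P) (x : Fin n → Fin 2) :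
    ∑ s ∈ range S, centeredSum v (P s) x = ∑ j, ((x j : ℕ) : ℝ) * v j - (∑ j, v j) / 2 := by
  have hcover : (range S).biUnion P = univ := eq_univ_of_forall fun j => by
    obtain ⟨s, ⟨hs, hj⟩, -⟩ := h.2.1 j (mem_univ j)
    exact mem_biUnion.mpr ⟨s, mem_range.mpr hs, hj⟩
  have hdisj : (range S : Set ℕ).PairwiseDisjoint P := fun s hs k hk hsk => by
    rcases hsk.lt_or_gt with hsk | hsk
    · exact h.disjoint hsk (mem_range.mp hk)
    · exact (h.disjoint hsk (mem_range.mp hs)).symm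
  rw [sum_div, ← sum_sub_distrib, ← hcover, sum_biUnion hdisj]
  exact sum_congr rfl fun s _ => sum_congr rfl fun j _ => by ring

lemma decay (h : HasScalesOn v univ S P) (s : ℕ) (hs : s + 1 < S) :
    88 * scaleNorm v (P (s + 1)) ≤ scaleNorm v (P s) :=
  (mul_le_mul_of_nonneg_right (by norm_num) (Real.sqrt_nonneg _)).trans (h.2.2 s hs)

end HasScalesOn

/-- Anti-concentration for vectors with many scales: there is `C₂ > 1` such that if
`v ∈ ℝ^n` has `S` scales with smallest scale of size `δ > 0`, then for every `a ∈ ℝ`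
and `b ≥ 2`, `ℙ(|⟨x,v⟩ - a| < bδ) < C₂ exp(-S/C₂ + C₂ log b)`. -/
theorem anticoncentration_many_scales :
    ∃ C₂ : ℝ, C₂ > 1 ∧ ∀ (n S : ℕ) (v : Fin n → ℝ) (P : ℕ → Finset (Fin n)),
      0 < S → HasScalesOn v Finset.univ S P →
      ∀ δ : ℝ, δ = scaleNorm v (P (S - 1)) → 0 < δ →
      ∀ a b : ℝ, 2 ≤ b →
        cubeProb n {x | |∑ j, ((x j : ℕ) : ℝ) * v j - a| < b * δ}
          < C₂ * Real.exp (-(S : ℝ) / C₂ + C₂ * Real.log b) := by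
  refine ⟨40, by norm_num, fun n S v P _ hP δ hδ hδ0 a b hb => ?_⟩
  classical
  have hw : ∀ s < S, 0 < scaleNorm v (P s) ∧ scaleNorm v (P s) ^ 2 = ∑ j ∈ P s, v j ^ 2 :=
    fun s hs => by
      refine ⟨?_, Real.sq_sqrt (sum_nonneg fun _ _ => sq_nonneg _)⟩
      have h := pow_mul_le_of_forall_mul_le (w := fun s => scaleNorm v (P s))
        (by norm_num : (0 : ℝ) ≤ 88) hP.decay (s := s) (u := S - 1) (by omega) (by omega)
      rw [← hδ] at h
      exact (mul_pos (by positivity) hδ0).trans_le h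
  calc cubeProb n {x | |∑ j, ((x j : ℕ) : ℝ) * v j - a| < b * δ}
      = 𝔼 x, if |∑ s ∈ range S, centeredSum v (P s) x - (a - (∑ j, v j) / 2)| < b * δ
          then 1 else 0 := by
        simp_rw [cubeProb_eq_expect, Set.mem_ofPred_eq, hP.sum_centeredSum,
          sub_sub_sub_cancel_right]
    _ ≤ (39 / 40) ^ S * 4 ^ ((range S).filter fun s => scaleNorm v (P s) < 8 * (b * δ)).card :=
        expect_abs_sum_centeredSum_sub_lt_le v P _ (fun _ _ => hP.disjoint) hw hP.decay _ _
    _ ≤ (39 / 40) ^ S * (4 * (8 * b)) := by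
        gcongr
        rw [← mul_assoc 8 b δ]
        exact four_pow_card_filter_lt_le (w := fun s => scaleNorm v (P s)) (by linarith) hδ0
          hP.decay hδ.le
    _ < 40 * Real.exp (-(S : ℝ) / 40 + 40 * Real.log b) := pow_mul_lt_exp_neg_add_log hb S
end

section
/- Let δ > 0, b ≥ 2, let R = {r₁ < r₂ < … < r_m} be a finite set of indices, and let (z_r)_{r ∈ R} be real numbers such that |z_r| ≥ 4|z_s| whenever r, s ∈ R and r < s, and |z_r| > 3bδ for every r ∈ R. Then, for every c ∈ ℝ, there is at most one sign vector ε ∈ {−1, +1}^R satisfying | Σ_{r ∈ R} ε_r z_r − c | < bδ. -/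
open Finset

lemma sum_abs_third (z : ℕ → ℝ) :
    ∀ (S : Finset ℕ) (r : ℕ),
    (∀ a ∈ S, ∀ b ∈ S, a < b → |z a| ≥ 4 * |z b|) →
    (∀ s ∈ S, |z r| ≥ 4 * |z s|) →
    ∑ s ∈ S, |z s| ≤ |z r| / 3 := by
  intro S
  induction S using Finset.strongInduction with
  | _ S ih =>
    intro r hchain hr
    rcases S.eq_empty_or_nonempty with rfl | hne
    · simp; positivity
    · set m := S.min' hne with hm
      have hmS : m ∈ S := S.min'_mem hne
      have hsum : ∑ s ∈ S, |z s| = |z m| + ∑ s ∈ S.erase m, |z s| :=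
        (Finset.add_sum_erase S _ hmS).symm
      have hlt : ∀ s ∈ S.erase m, m < s := by
        intro s hs
        exact lt_of_le_of_ne (S.min'_le s (Finset.mem_of_mem_erase hs))
          (Ne.symm (Finset.ne_of_mem_erase hs))
      have hrec : ∑ s ∈ S.erase m, |z s| ≤ |z m| / 3 := by
        apply ih (S.erase m) (Finset.erase_ssubset hmS) m
        · intro a ha b hb h
          exact hchain a (Finset.mem_of_mem_erase ha) b (Finset.mem_of_mem_erase hb) h
        · intro s hs
          exact hchain m hmS s (Finset.mem_of_mem_erase hs) (hlt s hs)
      have h2 : 4 * |z m| ≤ |z r| := hr m hmS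
      linarith

lemma sign_aux {δ b : ℝ} (hδ : 0 < δ) (hb : 2 ≤ b) (z : ℕ → ℝ) :
    ∀ (R : Finset ℕ),
    (∀ r ∈ R, ∀ s ∈ R, r < s → |z r| ≥ 4 * |z s|) →
    (∀ r ∈ R, |z r| > 3 * b * δ) →
    ∀ (c : ℝ) (ε ε' : ℕ → ℝ),
    (∀ r ∈ R, ε r = 1 ∨ ε r = -1) → (∀ r ∈ R, ε' r = 1 ∨ ε' r = -1) →
    |∑ r ∈ R, ε r * z r - c| < b * δ →
    |∑ r ∈ R, ε' r * z r - c| < b * δ →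
    ∀ r ∈ R, ε r = ε' r := by
  intro R
  induction R using Finset.strongInduction with
  | _ R ih =>
    intro hdec hbig c ε ε' hε hε' h1 h2 r hr
    have hne : R.Nonempty := ⟨r, hr⟩
    set m := R.min' hne with hm
    have hmR : m ∈ R := R.min'_mem hne
    have hlt : ∀ s ∈ R.erase m, m < s := by
      intro s hs
      exact lt_of_le_of_ne (R.min'_le s (Finset.mem_of_mem_erase hs))
        (Ne.symm (Finset.ne_of_mem_erase hs))
    -- bound tail sum
    have htail : ∑ s ∈ R.erase m, |z s| ≤ |z m| / 3 := by
      apply sum_abs_third z (R.erase m) m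
      · intro a ha b hb h
        exact hdec a (Finset.mem_of_mem_erase ha) b (Finset.mem_of_mem_erase hb) h
      · intro s hs
        exact hdec m hmR s (Finset.mem_of_mem_erase hs) (hlt s hs)
    have hbd : 0 < b * δ := by nlinarith
    -- first: ε m = ε' m
    have hεm : ε m = ε' m := by
      by_contra hne'
      have habs : |ε m - ε' m| = 2 := by
        rcases hε m hmR with h | h <;> rcases hε' m hmR with h' | h'
        · exact absurd (h.trans h'.symm) hne'
        · rw [h, h']; norm_num
        · rw [h, h']; norm_num
        · exact absurd (h.trans h'.symm) hne'
      have hD : |∑ s ∈ R, (ε s - ε' s) * z s| < 2 * (b * δ) := by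
        have : ∑ s ∈ R, (ε s - ε' s) * z s
            = (∑ s ∈ R, ε s * z s - c) - (∑ s ∈ R, ε' s * z s - c) := by
          rw [sub_sub_sub_cancel_right, ← Finset.sum_sub_distrib]
          exact Finset.sum_congr rfl fun s _ => sub_mul _ _ _
        rw [this]
        calc |(∑ s ∈ R, ε s * z s - c) - (∑ s ∈ R, ε' s * z s - c)|
            ≤ |∑ s ∈ R, ε s * z s - c| + |∑ s ∈ R, ε' s * z s - c| := abs_sub _ _
          _ < 2 * (b * δ) := by linarith
      have hsplit : ∑ s ∈ R, (ε s - ε' s) * z s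
          = (ε m - ε' m) * z m + ∑ s ∈ R.erase m, (ε s - ε' s) * z s :=
        (Finset.add_sum_erase R _ hmR).symm
      have htail2 : |∑ s ∈ R.erase m, (ε s - ε' s) * z s| ≤ 2 * (|z m| / 3) := by
        calc |∑ s ∈ R.erase m, (ε s - ε' s) * z s|
            ≤ ∑ s ∈ R.erase m, |(ε s - ε' s) * z s| := Finset.abs_sum_le_sum_abs _ _
          _ ≤ ∑ s ∈ R.erase m, 2 * |z s| := by
              apply Finset.sum_le_sum
              intro s hs
              rw [abs_mul]
              have : |ε s - ε' s| ≤ 2 := by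
                rcases hε s (Finset.mem_of_mem_erase hs) with h | h <;>
                  rcases hε' s (Finset.mem_of_mem_erase hs) with h' | h' <;>
                  rw [h, h'] <;> norm_num
              nlinarith [abs_nonneg (z s)]
          _ = 2 * ∑ s ∈ R.erase m, |z s| := by rw [Finset.mul_sum]
          _ ≤ 2 * (|z m| / 3) := by linarith
      have hmain : |(ε m - ε' m) * z m| ≥ 2 * |z m| := by
        rw [abs_mul, habs]
      have hlow : 2 * |z m| - 2 * (|z m| / 3) ≤ |∑ s ∈ R, (ε s - ε' s) * z s| := by
        rw [hsplit]
        have := abs_add_le ((ε m - ε' m) * z m) (∑ s ∈ R.erase m, (ε s - ε' s) * z s)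
        have h3 : |(ε m - ε' m) * z m| - |∑ s ∈ R.erase m, (ε s - ε' s) * z s|
            ≤ |(ε m - ε' m) * z m + ∑ s ∈ R.erase m, (ε s - ε' s) * z s| := by
          have := abs_sub_abs_le_abs_sub ((ε m - ε' m) * z m)
            (-(∑ s ∈ R.erase m, (ε s - ε' s) * z s))
          rwa [abs_neg, sub_neg_eq_add] at this
        linarith [hmain, htail2, h3]
      have hz : |z m| > 3 * b * δ := hbig m hmR
      nlinarith
    -- inductive step on erase
    rcases eq_or_ne r m with rfl | hrm
    · exact hεm
    · have hrerase : r ∈ R.erase m := Finset.mem_erase.mpr ⟨hrm, hr⟩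
      apply ih (R.erase m) (Finset.erase_ssubset hmR)
        (fun a ha b hb h => hdec a (Finset.mem_of_mem_erase ha) b (Finset.mem_of_mem_erase hb) h)
        (fun s hs => hbig s (Finset.mem_of_mem_erase hs))
        (c - ε m * z m) ε ε'
        (fun s hs => hε s (Finset.mem_of_mem_erase hs))
        (fun s hs => hε' s (Finset.mem_of_mem_erase hs))
        ?_ ?_ r hrerase
      · have : ∑ s ∈ R.erase m, ε s * z s - (c - ε m * z m)
            = ∑ s ∈ R, ε s * z s - c := by
          rw [← Finset.add_sum_erase R _ hmR]; ring
        rw [this]; exact h1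
      · have : ∑ s ∈ R.erase m, ε' s * z s - (c - ε m * z m)
            = ∑ s ∈ R, ε' s * z s - c := by
          rw [← Finset.add_sum_erase R _ hmR, hεm]; ring
        rw [this]; exact h2

/-- Let `δ > 0`, `b ≥ 2`, let `R` be a finite set of indices and `(z r)_{r ∈ R}` reals
with `|z r| ≥ 4|z s|` whenever `r, s ∈ R` and `r < s`, and `|z r| > 3bδ` for all
`r ∈ R`. Then for every `c ∈ ℝ` there is at most one sign vector `ε ∈ {-1,+1}^R`
with `|∑_{r ∈ R} ε r · z r - c| < bδ`. -/
theorem at_most_one_sign_vector {δ b : ℝ} (hδ : 0 < δ) (hb : 2 ≤ b)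
    (R : Finset ℕ) (z : ℕ → ℝ)
    (hdec : ∀ r ∈ R, ∀ s ∈ R, r < s → |z r| ≥ 4 * |z s|)
    (hbig : ∀ r ∈ R, |z r| > 3 * b * δ)
    (c : ℝ) (ε ε' : ℕ → ℝ)
    (hε : ∀ r ∈ R, ε r = 1 ∨ ε r = -1) (hε' : ∀ r ∈ R, ε' r = 1 ∨ ε' r = -1)
    (h1 : |∑ r ∈ R, ε r * z r - c| < b * δ)
    (h2 : |∑ r ∈ R, ε' r * z r - c| < b * δ) :
    ∀ r ∈ R, ε r = ε' r :=
  sign_aux hδ hb z R hdec hbig c ε ε' hε hε' h1 h2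
end

section
/- Let M be a k × k symmetric real matrix with M_{tt} ≥ 0 for every t ∈ [k]. Then for every ζ = (ζ₁,…,ζ_k) ∈ ℝ^k and every θ = (θ₁,…,θ_k) ∈ ℝ^k with all θ_t ≥ 0, there exists ε ∈ {−1,+1}^k such that |(M(θε))_t − ζ_t| ≥ M_{tt}·θ_t for every t ∈ [k], where θε denotes the coordinatewise product (θ₁ε₁,…,θ_kε_k). -/
open Finset Matrix

private lemma sum_shift {k : ℕ} (f g : Fin k → ℝ) (t : Fin k)
    (h : ∀ j, j ≠ t → f j = g j) : ∑ j, f j = ∑ j, g j + (f t - g t) := by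
  have hf : f = Function.update g t (f t) := by
    funext j
    by_cases hj : j = t
    · subst hj; simp
    · simp [Function.update_of_ne hj, h j hj]
  rw [hf, Finset.sum_update_of_mem (Finset.mem_univ t)]
  rw [show (Finset.univ : Finset (Fin k)) \ {t} = Finset.univ.erase t by
    rw [Finset.sdiff_singleton_eq_erase]]
  rw [← Finset.add_sum_erase _ g (Finset.mem_univ t)]
  simp
  ring

/-- Bang's Lemma: if `M` is a `k × k` symmetric real matrix with nonnegative diagonal,
then for every `ζ ∈ ℝ^k` and every `θ ∈ ℝ^k` with nonnegative entries there is a sign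
vector `ε ∈ {-1,+1}^k` such that `|(M(θε))_t - ζ_t| ≥ M_{tt} θ_t` for every `t`. -/
theorem bang_lemma {k : ℕ} (M : Matrix (Fin k) (Fin k) ℝ) (hM : M.IsSymm)
    (hdiag : ∀ t, 0 ≤ M t t) (ζ θ : Fin k → ℝ) (hθ : ∀ t, 0 ≤ θ t) :
    ∃ ε : Fin k → ℝ, (∀ t, ε t = 1 ∨ ε t = -1) ∧
      ∀ t, |M.mulVec (fun i => θ i * ε i) t - ζ t| ≥ M t t * θ t := by
  classical
  set sgn : Bool → ℝ := fun b => if b then 1 else -1 with hsgn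
  set R : (Fin k → ℝ) → ℝ := fun y =>
    (∑ s, y s * M.mulVec y s) - 2 * ∑ s, ζ s * y s with hR
  set Q : (Fin k → Bool) → ℝ := fun e => R (fun i => θ i * sgn (e i)) with hQ
  obtain ⟨e, -, hmax⟩ := Finset.exists_max_image (Finset.univ : Finset (Fin k → Bool)) Q
    ⟨fun _ => true, Finset.mem_univ _⟩
  refine ⟨fun i => sgn (e i), fun t => by by_cases h : e t <;> simp [hsgn, h], fun t => ?_⟩
  set x : Fin k → ℝ := fun i => θ i * sgn (e i) with hx
  set a : ℝ := M.mulVec x t with ha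
  set d : ℝ := x t with hd
  set e' : Fin k → Bool := Function.update e t (!e t) with he'
  have hx' : (fun i => θ i * sgn (e' i)) = Function.update x t (-d) := by
    funext j
    by_cases hj : j = t
    · subst hj
      simp only [he', Function.update_self, hd, hx, hsgn]
      cases e j <;> simp <;> ring
    · simp [he', Function.update_of_ne hj, hx]
  have hmv : ∀ s, M.mulVec (Function.update x t (-d)) s = M.mulVec x s - 2 * M s t * d := by
    intro s
    simp only [Matrix.mulVec, dotProduct]
    rw [sum_shift (fun j => M s j * Function.update x t (-d) j) (fun j => M s j * x j) t
      (fun j hj => by simp [Function.update_of_ne hj])]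
    simp [← hd]
    ring
  have hsym : ∑ s, x s * M s t = a := by
    rw [ha]
    simp only [Matrix.mulVec, dotProduct]
    exact Finset.sum_congr rfl (fun s _ => by rw [hM.apply t s]; ring)
  have hquad : ∑ s, Function.update x t (-d) s * M.mulVec (Function.update x t (-d)) s
      = ∑ s, x s * M.mulVec x s - 4 * d * a + 4 * M t t * d ^ 2 := by
    have h1 : ∀ s ∈ Finset.univ,
        Function.update x t (-d) s * M.mulVec (Function.update x t (-d)) s
        = Function.update x t (-d) s * (M.mulVec x s - 2 * M s t * d) := fun s _ => by
      rw [hmv s]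
    rw [Finset.sum_congr rfl h1]
    rw [sum_shift (fun s => Function.update x t (-d) s * (M.mulVec x s - 2 * M s t * d))
      (fun s => x s * (M.mulVec x s - 2 * M s t * d)) t
      (fun s hs => by simp [Function.update_of_ne hs])]
    have h2 : ∑ s, x s * (M.mulVec x s - 2 * M s t * d)
        = ∑ s, x s * M.mulVec x s - 2 * d * ∑ s, x s * M s t := by
      rw [Finset.mul_sum, ← Finset.sum_sub_distrib]
      exact Finset.sum_congr rfl (fun s _ => by ring)
    rw [h2, hsym]
    simp [← hd, ← ha]
    ring
  have hlin : ∑ s, ζ s * Function.update x t (-d) s = ∑ s, ζ s * x s - 2 * ζ t * d := by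
    rw [sum_shift (fun s => ζ s * Function.update x t (-d) s) (fun s => ζ s * x s) t
      (fun s hs => by simp [Function.update_of_ne hs])]
    simp [← hd]
    ring
  have hRu : R (Function.update x t (-d)) = R x - 4 * d * (a - ζ t) + 4 * M t t * d ^ 2 := by
    simp only [hR]
    rw [hquad, hlin]
    ring
  have hle : R (Function.update x t (-d)) ≤ R x := by
    have h1 : Q e' = R (Function.update x t (-d)) := by simp only [hQ]; rw [hx']
    have h2 : Q e = R x := rfl
    rw [← h1, ← h2]
    exact hmax e' (Finset.mem_univ _)
  have key : M t t * d ^ 2 ≤ d * (a - ζ t) := by nlinarith [hRu, hle]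
  have hd2 : d ^ 2 = θ t ^ 2 := by
    simp only [hd, hx, hsgn]
    cases e t <;> simp <;> ring
  have habs : |d| = θ t := by
    simp only [hd, hx, hsgn]
    cases e t <;> simp [abs_mul, abs_of_nonneg (hθ t)]
  have hda : d * (a - ζ t) ≤ θ t * |a - ζ t| := by
    calc d * (a - ζ t) ≤ |d * (a - ζ t)| := le_abs_self _
      _ = |d| * |a - ζ t| := abs_mul _ _
      _ = θ t * |a - ζ t| := by rw [habs]
  have hfin : M t t * θ t * θ t ≤ θ t * |a - ζ t| := by
    have h := key.trans hda
    rw [hd2] at h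
    nlinarith [h]
  show M t t * θ t ≤ |M.mulVec (fun i => θ i * sgn (e i)) t - ζ t|
  rw [show (fun i => θ i * sgn (e i)) = x from rfl, ← ha]
  rcases eq_or_lt_of_le (hθ t) with h0 | h0
  · rw [← h0]; simpa using abs_nonneg (a - ζ t)
  · exact le_of_mul_le_mul_right (by nlinarith [hfin]) h0
end

section
/- Every essential cover of the n-cube {0,1}^n has at least n^{1/3} hyperplanes; that is, if the hyperplanes ⟨v_i, x⟩ = μ_i (i ∈ [k]) form an essential cover of {0,1}^n, then k ≥ n^{1/3}. -/
open Finset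

/-- A point of the `n`-cube `{0,1}^n`. -/
def IsCubeVertex {n : ℕ} (x : Fin n → ℝ) : Prop := ∀ j, x j = 0 ∨ x j = 1

/-- The hyperplanes `⟨v i, x⟩ = μ i`, `i ∈ [k]`, with `v i ∈ ℝ^n \ {0}`, form an
essential cover of the `n`-cube `{0,1}^n`. -/
def IsEssentialCover {n k : ℕ} (v : Fin k → Fin n → ℝ) (μ : Fin k → ℝ) : Prop :=
  (∀ i, v i ≠ 0) ∧
  (∀ x : Fin n → ℝ, IsCubeVertex x → ∃ i, ∑ j, v i j * x j = μ i) ∧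
  (∀ j : Fin n, ∃ i, v i j ≠ 0) ∧
  (∀ i, ∃ x : Fin n → ℝ, IsCubeVertex x ∧ ∑ j, v i j * x j = μ i ∧
    ∀ i', i' ≠ i → ∑ j, v i' j * x j ≠ μ i')

noncomputable def ind {m : ℕ} (T : Finset (Fin m)) : Fin m → ℝ := fun j => if j ∈ T then 1 else 0

lemma ind_cube {m : ℕ} (T : Finset (Fin m)) : IsCubeVertex (ind T) := by
  intro j; unfold ind; split <;> simp

lemma AF {m : ℕ} {ι : Type*} [Fintype ι] [DecidableEq ι] (w : ι → Fin m → ℝ) (c : ι → ℝ)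
    (hc : ∀ i, c i ≠ 0)
    (hcov : ∀ z : Fin m → ℝ, IsCubeVertex z → z ≠ 0 → ∃ i, ∑ j, w i j * z j = c i) :
    m ≤ Fintype.card ι := by
  by_contra hlt
  push_neg at hlt
  set F : (Fin m → ℝ) → ℝ := fun x => ∏ i, (∑ j, w i j * x j - c i) with hF
  have ha : ∑ T : Finset (Fin m), (-1:ℝ)^T.card * F (ind T) = ∏ i, (-c i) := by
    rw [Finset.sum_eq_single (∅ : Finset (Fin m))]
    · simp [hF, ind]
    · intro T _ hT
      have hne : ind T ≠ 0 := by
        intro h0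
        apply hT
        rw [Finset.eq_empty_iff_forall_notMem]
        intro j hj
        have := congrFun h0 j
        simp [ind, hj] at this
      obtain ⟨i, hi⟩ := hcov (ind T) (ind_cube T) hne
      have : F (ind T) = 0 :=
        Finset.prod_eq_zero (Finset.mem_univ i) (by rw [hi]; ring)
      simp [this]
    · simp
  have hb : ∑ T : Finset (Fin m), (-1:ℝ)^T.card * F (ind T) = 0 := by
    have expand : ∀ x : Fin m → ℝ,
        F x = ∑ φ : ι → Option (Fin m), ∏ i, Option.elim (φ i) (-c i) (fun j => w i j * x j) := by
      intro x
      rw [hF]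
      have h1 : ∀ i : ι, (∑ j, w i j * x j - c i)
          = ∑ o : Option (Fin m), Option.elim o (-c i) (fun j => w i j * x j) := by
        intro i
        rw [Fintype.sum_option]
        simp [sub_eq_add_neg, add_comm]
      simp only [h1]
      exact Fintype.prod_sum _
    simp only [expand, Finset.mul_sum]
    rw [Finset.sum_comm]
    apply Finset.sum_eq_zero
    intro φ _
    have hj₀ : ∃ j₀ : Fin m, ∀ i, φ i ≠ some j₀ := by
      by_contra hno
      push_neg at hno
      have hinj : Function.Injective (fun j : Fin m => (hno j).choose) := by
        intro a b hab
        have hab' : (hno a).choose = (hno b).choose := hab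
        have ha' := (hno a).choose_spec
        have hb' := (hno b).choose_spec
        rw [hab'] at ha'
        rw [ha'] at hb'
        exact Option.some_injective _ hb'
      have := Fintype.card_le_of_injective _ hinj
      simp at this
      omega
    obtain ⟨j₀, hj₀⟩ := hj₀
    apply Finset.sum_ninvolution (fun T => if j₀ ∈ T then T.erase j₀ else insert j₀ T)
    · intro T
      have hprod : ∀ T' : Finset (Fin m), (∀ j, j ≠ j₀ → (j ∈ T' ↔ j ∈ T)) →
          (∏ i, Option.elim (φ i) (-c i) (fun j => w i j * ind T' j))
          = ∏ i, Option.elim (φ i) (-c i) (fun j => w i j * ind T j) := by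
        intro T' hT'
        apply Finset.prod_congr rfl
        intro i _
        cases hφ : φ i with
        | none => rfl
        | some j =>
          have hjne : j ≠ j₀ := by intro h; exact hj₀ i (by rw [hφ, h])
          simp [ind, hT' j hjne]
      by_cases hmem : j₀ ∈ T
      · rw [if_pos hmem, hprod (T.erase j₀) (fun j hj => by simp [Finset.mem_erase, hj]),
          Finset.card_erase_of_mem hmem]
        have h1 : 1 ≤ T.card := Finset.card_pos.mpr ⟨j₀, hmem⟩
        have : (-1:ℝ)^(T.card - 1) * (-1) = (-1:ℝ)^T.card := by
          rw [← pow_succ]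
          congr 1
          omega
        rw [← this]
        ring
      · rw [if_neg hmem, hprod (insert j₀ T) (fun j hj => by simp [Finset.mem_insert, hj]),
          Finset.card_insert_of_notMem hmem, pow_succ]
        ring
    · intro T _
      by_cases hmem : j₀ ∈ T
      · simp only [if_pos hmem]
        intro h
        have := h ▸ hmem
        simp at this
      · simp only [if_neg hmem]
        intro h
        rw [← h] at hmem
        simp at hmem
    · intro T; exact Finset.mem_univ _
    · intro T
      by_cases hmem : j₀ ∈ T
      · simp [hmem, Finset.insert_erase hmem]
      · simp [hmem, Finset.erase_insert hmem]
  rw [hb] at ha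
  have : ∃ i ∈ (Finset.univ : Finset ι), (-c i) = 0 := Finset.prod_eq_zero_iff.mp ha.symm
  obtain ⟨i, _, hi⟩ := this
  exact hc i (by linarith [neg_eq_zero.mp hi])

lemma pos_support_card_le {n k : ℕ} (v : Fin k → Fin n → ℝ) (μ : Fin k → ℝ)
    (hcov : ∀ x : Fin n → ℝ, IsCubeVertex x → ∃ i, ∑ j, v i j * x j = μ i)
    (i : Fin k) (x : Fin n → ℝ) (hx : IsCubeVertex x)
    (hxi : ∑ j, v i j * x j = μ i)
    (hpriv : ∀ i', i' ≠ i → ∑ j, v i' j * x j ≠ μ i') :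
    ((univ : Finset (Fin n)).filter (fun j => 0 < v i j * (1 - 2 * x j))).card ≤ k - 1 := by
  classical
  set s := (univ : Finset (Fin n)).filter (fun j => 0 < v i j * (1 - 2 * x j)) with hs
  have hmem : ∀ j ∈ s, 0 < v i j * (1 - 2 * x j) := by
    intro j hj
    rw [hs, Finset.mem_filter] at hj
    exact hj.2
  set m := s.card with hm
  let e : {j // j ∈ s} ≃ Fin m := Fintype.equivFinOfCardEq (Fintype.card_coe s)
  set Z : (Fin m → ℝ) → Fin n → ℝ :=
    fun z j => if hj : j ∈ s then z (e ⟨j, hj⟩) else 0 with hZ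
  have hkey : ∀ (z : Fin m → ℝ) (f : Fin n → ℝ),
      ∑ j, f j * Z z j = ∑ t, f (e.symm t).1 * z t := by
    intro z f
    have h1 : ∑ j ∈ s, f j * Z z j = ∑ j, f j * Z z j := by
      apply Finset.sum_subset (Finset.subset_univ s)
      intro j _ hj
      simp [hZ, hj]
    rw [← h1, ← Finset.sum_attach s (fun j => f j * Z z j)]
    have h2 : ∀ a : {j // j ∈ s}, f a.1 * Z z a.1 = f a.1 * z (e a) := by
      intro a
      simp [hZ, a.2]
    rw [Finset.sum_congr rfl (fun a _ => h2 a), ← Finset.univ_eq_attach,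
      ← Equiv.sum_comp e.symm (fun a : {j // j ∈ s} => f a.1 * z (e a))]
    apply Finset.sum_congr rfl
    intro t _
    simp
  have hsum : ∀ (z : Fin m → ℝ) (i'' : Fin k),
      ∑ j, v i'' j * (x j + (1 - 2 * x j) * Z z j)
        = (∑ j, v i'' j * x j) + ∑ t, v i'' (e.symm t).1 * (1 - 2 * x (e.symm t).1) * z t := by
    intro z i''
    have h1 : ∀ j, v i'' j * (x j + (1 - 2 * x j) * Z z j)
        = v i'' j * x j + (v i'' j * (1 - 2 * x j)) * Z z j := by intro j; ring
    rw [Finset.sum_congr rfl (fun j _ => h1 j), Finset.sum_add_distrib]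
    congr 1
    exact hkey z (fun j => v i'' j * (1 - 2 * x j))
  have hAF := AF (ι := {i' : Fin k // i' ≠ i})
      (w := fun i' t => v i'.1 (e.symm t).1 * (1 - 2 * x (e.symm t).1))
      (c := fun i' => μ i'.1 - ∑ j, v i'.1 j * x j)
      (fun i' => sub_ne_zero_of_ne (Ne.symm (hpriv i'.1 i'.2)))
      ?_
  · have hcard : Fintype.card {i' : Fin k // i' ≠ i} = k - 1 := by
      simp [Fintype.card_subtype_compl]
    rw [hcard] at hAF
    exact hAF
  · intro z hz hz0
    set y : Fin n → ℝ := fun j => x j + (1 - 2 * x j) * Z z j with hy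
    have hZ01 : ∀ j, Z z j = 0 ∨ Z z j = 1 := by
      intro j
      rw [hZ]
      dsimp only
      split
      · exact hz _
      · left; rfl
    have hycube : IsCubeVertex y := by
      intro j
      rcases hx j with h | h <;> rcases hZ01 j with h2 | h2 <;>
        simp [hy, h, h2] <;> norm_num
    have hyi : ∑ j, v i j * y j ≠ μ i := by
      rw [hy, hsum z i, hxi]
      have hpos : 0 < ∑ t, v i (e.symm t).1 * (1 - 2 * x (e.symm t).1) * z t := by
        apply Finset.sum_pos'
        · intro t _
          rcases hz t with h | h
          · simp [h]
          · rw [h, mul_one]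
            exact le_of_lt (hmem _ (e.symm t).2)
        · obtain ⟨t₀, ht₀⟩ := Function.ne_iff.mp hz0
          simp only [Pi.zero_apply] at ht₀
          refine ⟨t₀, Finset.mem_univ _, ?_⟩
          have hz1 : z t₀ = 1 := by
            rcases hz t₀ with h | h
            · exact absurd h ht₀
            · exact h
          rw [hz1, mul_one]
          exact hmem _ (e.symm t₀).2
      intro habs
      linarith
    obtain ⟨i'', hi''⟩ := hcov y hycube
    have hne : i'' ≠ i := fun h => hyi (h ▸ hi'')
    refine ⟨⟨i'', hne⟩, ?_⟩
    have h3 := hsum z i''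
    rw [hy] at hi''
    rw [hi''] at h3
    dsimp only
    linarith

/-- An essential cover of the `n`-cube has at least `n^{1/3}` hyperplanes. -/
theorem essential_cover_cube_root_bound {n k : ℕ}
    (v : Fin k → Fin n → ℝ) (μ : Fin k → ℝ) (h : IsEssentialCover v μ) :
    (n : ℝ) ^ ((1 : ℝ) / 3) ≤ (k : ℝ) := by
  classical
  obtain ⟨hv0, hcov, hvar, hpriv⟩ := h
  choose xp hxpc hxpon hxppriv using hpriv
  have hpos : ∀ i, ((univ : Finset (Fin n)).filter
      (fun j => 0 < v i j * (1 - 2 * xp i j))).card ≤ k - 1 :=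
    fun i => pos_support_card_le v μ hcov i (xp i) (hxpc i) (hxpon i) (hxppriv i)
  have hneg : ∀ i, ((univ : Finset (Fin n)).filter
      (fun j => v i j * (1 - 2 * xp i j) < 0)).card ≤ k - 1 := by
    intro i
    have hc' : ∀ x : Fin n → ℝ, IsCubeVertex x →
        ∃ i', ∑ j, -(v i' j) * x j = -(μ i') := by
      intro x hx
      obtain ⟨i0, h0⟩ := hcov x hx
      exact ⟨i0, by simp only [neg_mul]; rw [Finset.sum_neg_distrib, h0]⟩
    have hon' : ∑ j, -(v i j) * xp i j = -(μ i) := by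
      simp only [neg_mul]; rw [Finset.sum_neg_distrib, hxpon i]
    have hpriv' : ∀ i', i' ≠ i → ∑ j, -(v i' j) * xp i j ≠ -(μ i') := by
      intro i' hi' heq
      apply hxppriv i i' hi'
      have : -∑ j, v i' j * xp i j = -(μ i') := by
        rw [← Finset.sum_neg_distrib]
        simpa only [neg_mul] using heq
      linarith [this]
    have hres := pos_support_card_le (fun i' j => -(v i' j)) (fun i' => -(μ i'))
      hc' i (xp i) (hxpc i) hon' hpriv'
    have hset : ((univ : Finset (Fin n)).filter (fun j => v i j * (1 - 2 * xp i j) < 0))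
        = ((univ : Finset (Fin n)).filter (fun j => 0 < -(v i j) * (1 - 2 * xp i j))) := by
      apply Finset.filter_congr
      intro j _
      rw [neg_mul, neg_pos]
    rw [hset]
    exact hres
  have hcount : n ≤ k * (2 * (k - 1)) := by
    have hsub : (univ : Finset (Fin n)) ⊆ (univ : Finset (Fin k)).biUnion
        (fun i => ((univ : Finset (Fin n)).filter (fun j => 0 < v i j * (1 - 2 * xp i j)))
          ∪ ((univ : Finset (Fin n)).filter (fun j => v i j * (1 - 2 * xp i j) < 0))) := by
      intro j _
      obtain ⟨i, hvij⟩ := hvar j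
      apply Finset.mem_biUnion.mpr
      refine ⟨i, Finset.mem_univ i, ?_⟩
      have hnz : v i j * (1 - 2 * xp i j) ≠ 0 := by
        apply mul_ne_zero hvij
        rcases hxpc i j with h' | h' <;> rw [h'] <;> norm_num
      rcases lt_or_gt_of_ne hnz with hlt | hgt
      · exact Finset.mem_union_right _ (Finset.mem_filter.mpr ⟨Finset.mem_univ _, hlt⟩)
      · exact Finset.mem_union_left _ (Finset.mem_filter.mpr ⟨Finset.mem_univ _, hgt⟩)
    calc n = (univ : Finset (Fin n)).card := (Finset.card_fin n).symm
      _ ≤ _ := Finset.card_le_card hsub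
      _ ≤ ∑ i : Fin k, (((univ : Finset (Fin n)).filter
            (fun j => 0 < v i j * (1 - 2 * xp i j)))
          ∪ ((univ : Finset (Fin n)).filter (fun j => v i j * (1 - 2 * xp i j) < 0))).card :=
        Finset.card_biUnion_le
      _ ≤ ∑ _i : Fin k, 2 * (k - 1) := by
        apply Finset.sum_le_sum
        intro i _
        calc _ ≤ _ := Finset.card_union_le _ _
          _ ≤ (k - 1) + (k - 1) := Nat.add_le_add (hpos i) (hneg i)
          _ = 2 * (k - 1) := by ring
      _ = k * (2 * (k - 1)) := by simp [Finset.sum_const, mul_comm]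
  have hk3 : n ≤ k ^ 3 := by
    rcases k with _ | K
    · simpa using hcount
    · refine le_trans hcount ?_
      have : 2 * (K + 1 - 1) ≤ (K + 1) ^ 2 := by
        simp only [Nat.add_sub_cancel]
        nlinarith
      calc (K + 1) * (2 * (K + 1 - 1)) ≤ (K + 1) * (K + 1) ^ 2 :=
            Nat.mul_le_mul_left _ this
        _ = (K + 1) ^ 3 := by ring
  have h0 : (n : ℝ) ≤ (k : ℝ) ^ (3 : ℕ) := by exact_mod_cast hk3
  calc (n : ℝ) ^ ((1 : ℝ) / 3) ≤ ((k : ℝ) ^ (3 : ℕ)) ^ ((1 : ℝ) / 3) :=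
        Real.rpow_le_rpow (Nat.cast_nonneg n) h0 (by norm_num)
    _ = (k : ℝ) := by
        rw [← Real.rpow_natCast (k : ℝ) 3, ← Real.rpow_mul (Nat.cast_nonneg k)]
        norm_num
end

section
/- If the hyperplanes ⟨v_i, x⟩ = μ_i (i ∈ [k]) form an essential cover of the n-cube {0,1}^n, then |supp(v_i)| ≤ 2k for every i ∈ [k]. -/
open Finset

lemma alt_sum_prod_affine {ι : Type*} [DecidableEq ι] :
    ∀ (d : ℕ) (s : Finset ι), s.card < d → ∀ (w : ι → Fin d → ℝ) (c : ι → ℝ),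
    ∑ y : Fin d → Bool, (∏ j, (if y j then (-1:ℝ) else 1)) *
      ∏ i ∈ s, ((∑ j, w i j * (if y j then (1:ℝ) else 0)) + c i) = 0 := by
  intro d
  induction d with
  | zero => intro s hs; exact absurd hs (Nat.not_lt_zero _)
  | succ e ih =>
    intro s hs w c
    -- split off coordinate 0
    rw [← (Fin.consEquiv (fun _ : Fin (e+1) => Bool)).sum_comp]
    rw [Fintype.sum_prod_type]
    simp only [Fin.consEquiv_apply]
    -- rewrite each summand
    have hsplit : ∀ (b : Bool) (y : Fin e → Bool),
        (∏ j, (if (Fin.cons b y : Fin (e+1) → Bool) j then (-1:ℝ) else 1)) *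
          ∏ i ∈ s, ((∑ j, w i j * (if (Fin.cons b y : Fin (e+1) → Bool) j then (1:ℝ) else 0)) + c i)
        = ((if b then (-1:ℝ) else 1) * (∏ j, (if y j then (-1:ℝ) else 1))) *
          ∏ i ∈ s, ((w i 0 * (if b then (1:ℝ) else 0)) +
            ((∑ j, w i (Fin.succ j) * (if y j then (1:ℝ) else 0)) + c i)) := by
      intro b y
      simp only [Fin.prod_univ_succ, Fin.sum_univ_succ, Fin.cons_zero, Fin.cons_succ,
        add_assoc]
    simp only [hsplit]
    rw [Fintype.sum_bool]
    simp only [if_true, if_false, mul_zero, zero_add, mul_one, one_mul]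
    simp only [Bool.false_eq_true, if_false, mul_zero, zero_add, one_mul]
    have hcard : ∀ t ∈ s.powerset.erase ∅, (s \ t).card < e := by
      intro t ht
      rw [Finset.mem_erase, Finset.mem_powerset] at ht
      have h1 : 1 ≤ t.card := Finset.one_le_card.mpr (Finset.nonempty_of_ne_empty ht.1)
      have h2 := Finset.card_le_card ht.2
      rw [Finset.card_sdiff_of_subset ht.2]
      omega
    have key : ∑ y : Fin e → Bool, (∏ j, (if y j then (-1:ℝ) else 1)) *
        ∏ i ∈ s, (w i 0 + ((∑ j, w i (Fin.succ j) * (if y j then (1:ℝ) else 0)) + c i))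
        = ∑ y : Fin e → Bool, (∏ j, (if y j then (-1:ℝ) else 1)) *
        ∏ i ∈ s, ((∑ j, w i (Fin.succ j) * (if y j then (1:ℝ) else 0)) + c i) := by
      calc ∑ y : Fin e → Bool, (∏ j, (if y j then (-1:ℝ) else 1)) *
            ∏ i ∈ s, (w i 0 + ((∑ j, w i (Fin.succ j) * (if y j then (1:ℝ) else 0)) + c i))
          = ∑ y : Fin e → Bool, ∑ t ∈ s.powerset, (∏ j, (if y j then (-1:ℝ) else 1)) *
              ((∏ i ∈ t, w i 0) *
               ∏ i ∈ s \ t, ((∑ j, w i (Fin.succ j) * (if y j then (1:ℝ) else 0)) + c i)) := by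
            apply Finset.sum_congr rfl
            intro y _
            rw [Finset.prod_add, Finset.mul_sum]
        _ = ∑ t ∈ s.powerset, (∏ i ∈ t, w i 0) * ∑ y : Fin e → Bool,
              (∏ j, (if y j then (-1:ℝ) else 1)) *
               ∏ i ∈ s \ t, ((∑ j, w i (Fin.succ j) * (if y j then (1:ℝ) else 0)) + c i) := by
            rw [Finset.sum_comm]
            apply Finset.sum_congr rfl
            intro t _
            rw [Finset.mul_sum]
            apply Finset.sum_congr rfl
            intro y _
            ring
        _ = _ := by
            rw [← Finset.add_sum_erase _ _ (Finset.empty_mem_powerset s)]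
            have hz : ∀ t ∈ s.powerset.erase ∅, (∏ i ∈ t, w i 0) *
                (∑ y : Fin e → Bool, (∏ j, (if y j then (-1:ℝ) else 1)) *
                  ∏ i ∈ s \ t, ((∑ j, w i (Fin.succ j) * (if y j then (1:ℝ) else 0)) + c i))
                = 0 := by
              intro t ht
              rw [ih (s \ t) (hcard t ht) (fun i j => w i (Fin.succ j)) c, mul_zero]
            rw [Finset.sum_eq_zero hz, add_zero]
            simp
    simp only [neg_one_mul, neg_mul, one_mul, Finset.sum_neg_distrib]
    rw [key, neg_add_cancel]

/-- In an essential cover of the `n`-cube, every vector has support of size at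
most `2k`. -/
theorem essential_cover_support_bound {n k : ℕ}
    (v : Fin k → Fin n → ℝ) (μ : Fin k → ℝ) (h : IsEssentialCover v μ) :
    ∀ i, {j : Fin n | v i j ≠ 0}.ncard ≤ 2 * k := by
  classical
  obtain ⟨hne, hcov, hsupp, hess⟩ := h
  intro i
  obtain ⟨x, hxcube, hxi, hxother⟩ := hess i
  set a : Fin n → ℝ := fun j => v i j * (1 - 2 * x j) with ha
  have key : ∀ σ : ℝ, ∀ F : Finset (Fin n), (∀ j ∈ F, 0 < σ * a j) → F.card < k := by
    intro σ F hF
    by_contra hd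
    push_neg at hd
    set d := F.card with hdd
    set e : {j // j ∈ F} ≃ Fin d := F.equivFin with he
    set δ : (Fin d → Bool) → Fin n → ℝ := fun z j =>
      if hj : j ∈ F then (if z (e ⟨j, hj⟩) then 1 - 2 * x j else 0) else 0 with hδ
    set xz : (Fin d → Bool) → Fin n → ℝ := fun z j => x j + δ z j with hxz
    have hδval : ∀ (z : Fin d → Bool) (p : Fin d),
        δ z ((e.symm p : {j // j ∈ F}) : Fin n)
          = (1 - 2 * x ((e.symm p : {j // j ∈ F}) : Fin n)) * (if z p then (1:ℝ) else 0) := by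
      intro z p
      simp only [hδ, (e.symm p).2, dif_pos, Subtype.coe_eta, Equiv.apply_symm_apply]
      split_ifs <;> ring
    have hcube : ∀ z, IsCubeVertex (xz z) := by
      intro z j
      rcases hxcube j with h0 | h0 <;>
      · simp only [hxz, hδ]
        split_ifs <;> norm_num [h0]
    have hsum : ∀ (i' : Fin k) (z : Fin d → Bool), ∑ j, v i' j * xz z j =
        (∑ j, v i' j * x j) +
        ∑ p : Fin d, (v i' ((e.symm p : {j // j ∈ F}) : Fin n) *
          (1 - 2 * x ((e.symm p : {j // j ∈ F}) : Fin n))) * (if z p then (1:ℝ) else 0) := by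
      intro i' z
      have h1 : ∑ j, v i' j * xz z j = (∑ j, v i' j * x j) + ∑ j, v i' j * δ z j := by
        rw [← Finset.sum_add_distrib]
        exact Finset.sum_congr rfl fun j _ => by simp only [hxz]; ring
      rw [h1]
      congr 1
      have h2 : ∀ j ∈ Finset.univ \ F, v i' j * δ z j = 0 := by
        intro j hj
        rw [Finset.mem_sdiff] at hj
        simp [hδ, hj.2]
      rw [← Finset.sum_subset (Finset.subset_univ F) (fun j _ hj => by simp [hδ, hj])]
      rw [← Finset.sum_coe_sort F (fun j => v i' j * δ z j)]
      rw [← e.symm.sum_comp (fun jj : {j // j ∈ F} => v i' (jj : Fin n) * δ z (jj : Fin n))]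
      exact Finset.sum_congr rfl fun p _ => by rw [hδval]; ring
    have hk : 0 < k := i.pos
    have hcard' : (Finset.univ.erase i).card < d := by
      rw [Finset.card_erase_of_mem (Finset.mem_univ i), Finset.card_univ, Fintype.card_fin]
      omega
    have hzero := alt_sum_prod_affine d (Finset.univ.erase i) hcard'
      (fun i' p => v i' ((e.symm p : {j // j ∈ F}) : Fin n) *
        (1 - 2 * x ((e.symm p : {j // j ∈ F}) : Fin n)))
      (fun i' => (∑ j, v i' j * x j) - μ i')
    have hterm : ∀ z : Fin d → Bool, z ≠ (fun _ => false) →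
        (∏ j, (if z j then (-1:ℝ) else 1)) *
        ∏ i' ∈ Finset.univ.erase i,
          ((∑ p, (v i' ((e.symm p : {j // j ∈ F}) : Fin n) *
            (1 - 2 * x ((e.symm p : {j // j ∈ F}) : Fin n))) * (if z p then (1:ℝ) else 0))
            + ((∑ j, v i' j * x j) - μ i')) = 0 := by
      intro z hz
      have hzne : ∃ p, z p = true := by
        by_contra hc
        push_neg at hc
        exact hz (funext fun p => by simpa using hc p)
      have hipos : 0 < σ * ∑ p, (v i ((e.symm p : {j // j ∈ F}) : Fin n) *
          (1 - 2 * x ((e.symm p : {j // j ∈ F}) : Fin n))) * (if z p then (1:ℝ) else 0) := by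
        rw [Finset.mul_sum]
        apply Finset.sum_pos'
        · intro p _
          by_cases hp : z p = true
          · simp only [hp, if_true, mul_one]
            exact le_of_lt (hF _ (e.symm p).2)
          · simp [hp]
        · obtain ⟨p, hp⟩ := hzne
          refine ⟨p, Finset.mem_univ p, ?_⟩
          simp only [hp, if_true, mul_one]
          exact hF _ (e.symm p).2
      have himiss : ∑ j, v i j * xz z j ≠ μ i := by
        rw [hsum i z, hxi]
        intro hcon
        have : σ * ∑ p, (v i ((e.symm p : {j // j ∈ F}) : Fin n) *
            (1 - 2 * x ((e.symm p : {j // j ∈ F}) : Fin n))) * (if z p then (1:ℝ) else 0) = 0 := by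
          have h0 : ∑ p, (v i ((e.symm p : {j // j ∈ F}) : Fin n) *
              (1 - 2 * x ((e.symm p : {j // j ∈ F}) : Fin n))) * (if z p then (1:ℝ) else 0) = 0 := by
            linarith
          rw [h0, mul_zero]
        linarith
      obtain ⟨i0, hi0⟩ := hcov (xz z) (hcube z)
      have hi0ne : i0 ≠ i := fun hh => himiss (hh ▸ hi0)
      apply mul_eq_zero_of_right
      apply Finset.prod_eq_zero (Finset.mem_erase.mpr ⟨hi0ne, Finset.mem_univ i0⟩)
      have h3 := hsum i0 z
      rw [hi0] at h3
      linarith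
    rw [Finset.sum_eq_single (fun _ => false) (fun z _ hz => hterm z hz)
      (fun hmem => absurd (Finset.mem_univ _) hmem)] at hzero
    simp only [Bool.false_eq_true, if_false, mul_zero, Finset.sum_const_zero, zero_add,
      Finset.prod_const_one, one_mul] at hzero
    have hprod : ∀ i' ∈ Finset.univ.erase i, (∑ j, v i' j * x j) - μ i' ≠ 0 := by
      intro i' h'
      exact sub_ne_zero.mpr (hxother i' (Finset.mem_erase.mp h').1)
    exact (Finset.prod_ne_zero_iff.mpr hprod) hzero
  have hSet : {j : Fin n | v i j ≠ 0} = ↑(Finset.univ.filter (fun j => v i j ≠ 0)) := by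
    ext j; simp
  rw [hSet, Set.ncard_coe_finset]
  have h1 := key 1 (Finset.univ.filter (fun j => 0 < a j))
    (fun j hj => by simpa using (Finset.mem_filter.mp hj).2)
  have h2 := key (-1) (Finset.univ.filter (fun j => a j < 0))
    (fun j hj => by have := (Finset.mem_filter.mp hj).2; nlinarith)
  have hsub : Finset.univ.filter (fun j => v i j ≠ 0) ⊆
      (Finset.univ.filter (fun j => 0 < a j)) ∪ (Finset.univ.filter (fun j => a j < 0)) := by
    intro j hj
    have hv := (Finset.mem_filter.mp hj).2
    have hane : a j ≠ 0 := by
      rcases hxcube j with h0 | h0 <;>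
      · simp only [ha]
        rw [h0]
        intro hc
        apply hv
        nlinarith
    rcases hane.lt_or_gt with hlt | hlt
    · exact Finset.mem_union_right _ (Finset.mem_filter.mpr ⟨Finset.mem_univ j, hlt⟩)
    · exact Finset.mem_union_left _ (Finset.mem_filter.mpr ⟨Finset.mem_univ j, hlt⟩)
  have hc1 := Finset.card_le_card hsub
  have hc2 := Finset.card_union_le (Finset.univ.filter (fun j => 0 < a j))
    (Finset.univ.filter (fun j => a j < 0))
  omega
end

section
/- If the hyperplanes ⟨v_i, x⟩ = μ_i (i ∈ [k]) form an essential cover of the n-cube {0,1}^n, then 2k² ≥ n; in particular, every essential cover of the n-cube has at least √(n/2) hyperplanes. -/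
open Finset

open scoped symmDiff

namespace EC
variable {n : ℕ}

noncomputable def sg (b : Bool) : ℝ := if b then -1 else 1
noncomputable def b2r (b : Bool) : ℝ := if b then 1 else 0
noncomputable def chi (T : Finset (Fin n)) (x : Fin n → Bool) : ℝ := ∏ j ∈ T, sg (x j)
def flp (j : Fin n) (x : Fin n → Bool) : Fin n → Bool := Function.update x j (!(x j))

lemma sg_mul_self (b : Bool) : sg b * sg b = 1 := by cases b <;> simp [sg]
lemma sg_not (b : Bool) : sg (!b) = - sg b := by cases b <;> simp [sg]
lemma b2r_eq (b : Bool) : b2r b = (1 - sg b) / 2 := by cases b <;> norm_num [sg, b2r]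

lemma flp_invol (j : Fin n) : Function.Involutive (flp j) := by
  intro x; funext i
  by_cases h : i = j <;> simp [flp, Function.update, h]

lemma chi_mul (T T' : Finset (Fin n)) (x : Fin n → Bool) :
    chi T x * chi T' x = chi (T ∆ T') x := by
  classical
  have h1 : chi T x = chi (T \ T') x * chi (T ∩ T') x := by
    rw [chi, chi, chi, ← Finset.prod_union (Finset.disjoint_sdiff_inter T T')]
    congr 1
    rw [Finset.sdiff_union_inter]
  have h2 : chi T' x = chi (T' \ T) x * chi (T ∩ T') x := by
    rw [chi, chi, chi, ← Finset.prod_union]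
    · congr 1
      rw [Finset.inter_comm, Finset.sdiff_union_inter]
    · exact Finset.disjoint_sdiff_inter T' T |>.mono_right (by rw [Finset.inter_comm])
  have hsq : chi (T ∩ T') x * chi (T ∩ T') x = 1 := by
    rw [chi, ← Finset.prod_mul_distrib]
    exact Finset.prod_eq_one fun i _ => sg_mul_self _
  have hdisj : Disjoint (T \ T') (T' \ T) := disjoint_sdiff_sdiff
  have : chi (T \ T') x * chi (T' \ T) x = chi (T ∆ T') x := by
    rw [chi, chi, chi, ← Finset.prod_union hdisj]
    congr 1
  calc chi T x * chi T' x
      = (chi (T \ T') x * chi (T' \ T) x) * (chi (T ∩ T') x * chi (T ∩ T') x) := by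
        rw [h1, h2]; ring
    _ = chi (T ∆ T') x := by rw [hsq, this, mul_one]

lemma chi_flp (j : Fin n) (T : Finset (Fin n)) (x : Fin n → Bool) :
    chi T (flp j x) = (if j ∈ T then (-1 : ℝ) else 1) * chi T x := by
  classical
  by_cases hj : j ∈ T
  · rw [if_pos hj, chi, chi, ← Finset.insert_erase hj,
      Finset.prod_insert (Finset.notMem_erase j T), Finset.prod_insert (Finset.notMem_erase j T)]
    have h1 : sg (flp j x j) = - sg (x j) := by
      rw [flp, Function.update_self, sg_not]
    have h2 : ∀ i ∈ T.erase j, sg (flp j x i) = sg (x i) := by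
      intro i hi
      rw [flp, Function.update_of_ne (Finset.ne_of_mem_erase hi)]
    rw [h1, Finset.prod_congr rfl h2]; ring
  · rw [if_neg hj, one_mul, chi, chi]
    exact Finset.prod_congr rfl fun i hi => by
      rw [flp, Function.update_of_ne (fun h : i = j => hj (by rw [← h]; exact hi))]

lemma sum_chi (U : Finset (Fin n)) :
    ∑ x : Fin n → Bool, chi U x = if U = ∅ then (2 ^ n : ℝ) else 0 := by
  classical
  by_cases hU : U = ∅
  · simp [hU, chi, Finset.card_univ]
  · rw [if_neg hU]
    obtain ⟨j, hj⟩ := Finset.nonempty_iff_ne_empty.2 hU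
    have hre : ∑ x : Fin n → Bool, chi U x = ∑ x : Fin n → Bool, chi U (flp j x) :=
      (Fintype.sum_equiv ((flp_invol j).toPerm) _ _ (fun x => rfl)).symm
    have : ∑ x : Fin n → Bool, chi U (flp j x) = - ∑ x : Fin n → Bool, chi U x := by
      rw [← Finset.sum_neg_distrib]
      exact Finset.sum_congr rfl fun x _ => by rw [chi_flp, if_pos hj]; ring
    have h0 := hre.trans this
    linarith

lemma orth (T T' : Finset (Fin n)) :
    ∑ x : Fin n → Bool, chi T x * chi T' x = if T = T' then (2 ^ n : ℝ) else 0 := by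
  classical
  simp_rw [chi_mul]
  rw [sum_chi]
  congr 1
  simp [symmDiff_eq_bot]

lemma chi_singleton (j : Fin n) (x : Fin n → Bool) : chi {j} x = sg (x j) := by
  simp [chi]


lemma card_symmDiff_singleton_ge (T : Finset (Fin n)) (j : Fin n) :
    T.card ≤ (T ∆ {j}).card + 1 := by
  classical
  have hsub : T ⊆ insert j (T ∆ {j}) := by
    intro t ht
    by_cases h : t = j
    · rw [h]; exact Finset.mem_insert_self j _
    · refine Finset.mem_insert_of_mem ?_
      rw [Finset.mem_symmDiff]
      exact Or.inl ⟨ht, by simp [h]⟩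
  calc T.card ≤ (insert j (T ∆ {j})).card := Finset.card_le_card hsub
    _ ≤ (T ∆ {j}).card + 1 := Finset.card_insert_le _ _

lemma exists_rep {k : ℕ} (w : Fin k → Fin n → ℝ) (μ : Fin k → ℝ) (A : Finset (Fin k)) :
    ∃ c : Finset (Fin n) → ℝ, (∀ T, c T ≠ 0 → T.card ≤ A.card) ∧
      ∀ x : Fin n → Bool,
        ∏ i ∈ A, (∑ j, w i j * b2r (x j) - μ i) = ∑ T : Finset (Fin n), c T * chi T x := by
  classical
  induction A using Finset.induction_on with
  | empty =>
    refine ⟨fun T => if T = ∅ then 1 else 0, ?_, ?_⟩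
    · intro T hT
      by_cases h : T = ∅
      · simp [h]
      · simp [h] at hT
    · intro x
      rw [Finset.prod_empty]
      rw [Finset.sum_eq_single (∅ : Finset (Fin n))]
      · simp [chi]
      · intro T _ hT; simp [hT]
      · intro h; exact absurd (Finset.mem_univ _) h
  | @insert a A ha ih =>
    obtain ⟨c, hdeg, hrep⟩ := ih
    refine ⟨fun T => ((∑ j, w a j) / 2 - μ a) * c T + ∑ j, (-(w a j) / 2) * c (T ∆ {j}),
      ?_, ?_⟩
    · intro T hT
      rw [Finset.card_insert_of_notMem ha]
      by_cases h1 : ((∑ j, w a j) / 2 - μ a) * c T = 0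
      · have h2 : (∑ j, (-(w a j) / 2) * c (T ∆ {j})) ≠ 0 := by
          intro h0
          apply hT
          show ((∑ j, w a j) / 2 - μ a) * c T + ∑ j, (-(w a j) / 2) * c (T ∆ {j}) = 0
          rw [h1, h0, add_zero]
        obtain ⟨j, _, hj⟩ := Finset.exists_ne_zero_of_sum_ne_zero h2
        have hc : c (T ∆ {j}) ≠ 0 := right_ne_zero_of_mul hj
        have hb := hdeg _ hc
        have hcard := card_symmDiff_singleton_ge T j
        omega
      · have hc : c T ≠ 0 := right_ne_zero_of_mul h1
        exact le_trans (hdeg T hc) (Nat.le_succ _)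
    · intro x
      rw [Finset.prod_insert ha, hrep x]
      have haff : (∑ j, w a j * b2r (x j) - μ a)
          = ((∑ j, w a j) / 2 - μ a) + ∑ j, (-(w a j) / 2) * sg (x j) := by
        have h0 : ∀ j ∈ (univ : Finset (Fin n)),
            w a j * b2r (x j) = w a j / 2 + (-(w a j) / 2) * sg (x j) := by
          intro j _; rw [b2r_eq]; ring
        rw [Finset.sum_congr rfl h0, Finset.sum_add_distrib, ← Finset.sum_div]
        ring
      have hswap : ∀ j : Fin n,
          sg (x j) * (∑ T : Finset (Fin n), c T * chi T x)
            = ∑ T : Finset (Fin n), c (T ∆ {j}) * chi T x := by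
        intro j
        have inv : Function.Involutive (fun T : Finset (Fin n) => T ∆ {j}) :=
          fun T => symmDiff_symmDiff_cancel_right {j} T
        rw [Finset.mul_sum]
        have h1 : ∀ T : Finset (Fin n),
            sg (x j) * (c T * chi T x) = c T * chi (T ∆ {j}) x := by
          intro T
          rw [← chi_singleton j x, mul_comm (chi {j} x), mul_assoc, chi_mul,
            symmDiff_comm]
        rw [Finset.sum_congr rfl fun T _ => h1 T]
        exact Fintype.sum_equiv inv.toPerm _ _ fun T => by
          simp only [Function.Involutive.coe_toPerm]
          rw [symmDiff_symmDiff_cancel_right]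
      rw [haff, add_mul, Finset.sum_mul]
      have h2 : ∀ j ∈ (univ : Finset (Fin n)),
          (-(w a j) / 2) * sg (x j) * (∑ T : Finset (Fin n), c T * chi T x)
            = ∑ T : Finset (Fin n), (-(w a j) / 2) * c (T ∆ {j}) * chi T x := by
        intro j _
        rw [mul_assoc, hswap j, Finset.mul_sum]
        exact Finset.sum_congr rfl fun T _ => by ring
      rw [Finset.sum_congr rfl h2, Finset.sum_comm, Finset.mul_sum,
        ← Finset.sum_add_distrib]
      exact Finset.sum_congr rfl fun T _ => by
        rw [add_mul, Finset.sum_mul]; ring_nf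

lemma small_support (f : (Fin n → Bool) → ℝ) (c : Finset (Fin n) → ℝ) (d : ℕ)
    (hf : ∀ x, f x = ∑ T : Finset (Fin n), c T * chi T x)
    (hdeg : ∀ T, c T ≠ 0 → T.card ≤ d)
    (S : Finset (Fin n))
    (hind : ∀ j ∈ S, ∀ x, f x * f (flp j x) = 0)
    (hne : ∃ x, f x ≠ 0) : S.card ≤ 2 * d := by
  classical
  by_contra hlt
  push_neg at hlt
  -- some coefficient is nonzero
  have hex : ∃ T, c T ≠ 0 := by
    by_contra hz
    push_neg at hz
    obtain ⟨x, hx⟩ := hne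
    exact hx (by rw [hf x]; exact Finset.sum_eq_zero fun T _ => by rw [hz T, zero_mul])
  -- for each j ∈ S, the signed Parseval sum vanishes
  have hA : ∀ j ∈ S, ∑ T : Finset (Fin n), c T ^ 2 * (if j ∈ T then (-1 : ℝ) else 1) = 0 := by
    intro j hj
    have h0 : (0 : ℝ) = ∑ x : Fin n → Bool, f x * f (flp j x) :=
      (Finset.sum_eq_zero fun x _ => hind j hj x).symm
    have h1 : ∑ x : Fin n → Bool, f x * f (flp j x)
        = ∑ T : Finset (Fin n), ∑ T' : Finset (Fin n),
            c T * c T' * (if j ∈ T' then (-1 : ℝ) else 1) *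
              (if T = T' then (2 ^ n : ℝ) else 0) := by
      have hpt : ∀ x, f x * f (flp j x)
          = ∑ T : Finset (Fin n), ∑ T' : Finset (Fin n),
              c T * c T' * (if j ∈ T' then (-1 : ℝ) else 1) * (chi T x * chi T' x) := by
        intro x
        rw [hf x, hf (flp j x), Finset.sum_mul_sum]
        exact Finset.sum_congr rfl fun T _ => Finset.sum_congr rfl fun T' _ => by
          rw [chi_flp]; ring
      rw [Finset.sum_congr rfl fun x (_ : x ∈ univ) => hpt x]
      rw [Finset.sum_comm]
      refine Finset.sum_congr rfl fun T _ => ?_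
      rw [Finset.sum_comm]
      refine Finset.sum_congr rfl fun T' _ => ?_
      rw [← Finset.mul_sum, orth]
    have h2 : ∑ T : Finset (Fin n), ∑ T' : Finset (Fin n),
        c T * c T' * (if j ∈ T' then (-1 : ℝ) else 1) *
          (if T = T' then (2 ^ n : ℝ) else 0)
        = (2 ^ n : ℝ) * ∑ T : Finset (Fin n), c T ^ 2 * (if j ∈ T then (-1 : ℝ) else 1) := by
      rw [Finset.mul_sum]
      refine Finset.sum_congr rfl fun T _ => ?_
      rw [Finset.sum_eq_single T]
      · rw [if_pos rfl]; ring
      · intro T' _ hT'; rw [if_neg (Ne.symm hT'), mul_zero]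
      · intro h; exact absurd (Finset.mem_univ _) h
    have h3 : (2 ^ n : ℝ) * ∑ T : Finset (Fin n), c T ^ 2 * (if j ∈ T then (-1 : ℝ) else 1)
        = 0 := by rw [← h2, ← h1, ← h0]
    have h4 : (2 ^ n : ℝ) ≠ 0 := by positivity
    exact (mul_eq_zero.mp h3).resolve_left h4
  -- sum over j ∈ S
  have htot : ∑ T : Finset (Fin n),
      c T ^ 2 * ((S.card : ℝ) - 2 * ((S ∩ T).card : ℝ)) = 0 := by
    have h5 : ∀ T : Finset (Fin n),
        ∑ j ∈ S, (if j ∈ T then (-1 : ℝ) else 1)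
          = (S.card : ℝ) - 2 * ((S ∩ T).card : ℝ) := by
      intro T
      rw [← Finset.sum_filter_add_sum_filter_not S (· ∈ T)]
      rw [Finset.filter_mem_eq_inter]
      have e1 : ∑ j ∈ S ∩ T, (if j ∈ T then (-1 : ℝ) else 1) = -((S ∩ T).card : ℝ) := by
        rw [Finset.sum_congr rfl fun j hj => if_pos (Finset.mem_inter.mp hj).2]
        simp
      have e2 : ∑ j ∈ S.filter (· ∉ T), (if j ∈ T then (-1 : ℝ) else 1)
          = ((S.filter (· ∉ T)).card : ℝ) := by
        rw [Finset.sum_congr rfl fun j hj => if_neg (Finset.mem_filter.mp hj).2]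
        simp
      rw [e1, e2]
      have e3 : (S.filter (· ∉ T)).card = S.card - (S ∩ T).card := by
        have : S.filter (· ∉ T) = S \ (S ∩ T) := by
          ext j
          simp [Finset.mem_filter, Finset.mem_sdiff, Finset.mem_inter]
        rw [this, Finset.card_sdiff_of_subset (Finset.inter_subset_left)]
      have e4 : (S ∩ T).card ≤ S.card := Finset.card_le_card Finset.inter_subset_left
      rw [e3]
      push_cast [e4]
      ring
    calc ∑ T : Finset (Fin n), c T ^ 2 * ((S.card : ℝ) - 2 * ((S ∩ T).card : ℝ))
        = ∑ T : Finset (Fin n), ∑ j ∈ S, c T ^ 2 * (if j ∈ T then (-1 : ℝ) else 1) := by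
          refine Finset.sum_congr rfl fun T _ => ?_
          rw [← Finset.mul_sum, h5 T]
      _ = ∑ j ∈ S, ∑ T : Finset (Fin n), c T ^ 2 * (if j ∈ T then (-1 : ℝ) else 1) :=
          Finset.sum_comm
      _ = 0 := Finset.sum_eq_zero fun j hj => hA j hj
  -- positivity contradiction
  have hpos : 0 < ∑ T : Finset (Fin n),
      c T ^ 2 * ((S.card : ℝ) - 2 * ((S ∩ T).card : ℝ)) := by
    obtain ⟨T₀, hT₀⟩ := hex
    have hkey : ∀ T : Finset (Fin n), c T ≠ 0 →
        0 < c T ^ 2 * ((S.card : ℝ) - 2 * ((S ∩ T).card : ℝ)) := by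
      intro T hT
      have h6 : (S ∩ T).card ≤ d :=
        le_trans (Finset.card_le_card Finset.inter_subset_right) (hdeg T hT)
      have h7 : (0 : ℝ) < (S.card : ℝ) - 2 * ((S ∩ T).card : ℝ) := by
        have : (2 * d : ℕ) < S.card := hlt
        have c1 : ((S ∩ T).card : ℝ) ≤ (d : ℝ) := by exact_mod_cast h6
        have c2 : (2 * d : ℝ) < (S.card : ℝ) := by exact_mod_cast this
        linarith
      exact mul_pos (by positivity) h7
    refine Finset.sum_pos' (fun T _ => ?_) ⟨T₀, Finset.mem_univ _, hkey T₀ hT₀⟩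
    by_cases hT : c T = 0
    · rw [hT]; simp
    · exact le_of_lt (hkey T hT)
  rw [htot] at hpos
  exact lt_irrefl 0 hpos

noncomputable def xi (x : Fin n → Bool) : Fin n → ℝ := fun j => b2r (x j)

lemma cube_xi (x : Fin n → Bool) : IsCubeVertex (xi x) := by
  intro j; cases hb : x j <;> simp [xi, b2r, hb]

lemma supp_bound {k : ℕ} (v : Fin k → Fin n → ℝ) (μ : Fin k → ℝ)
    (h : IsEssentialCover v μ) (i : Fin k) :
    (univ.filter fun j => v i j ≠ 0).card ≤ 2 * k := by
  classical
  obtain ⟨-, hcov, -, hwit⟩ := h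
  set f : (Fin n → Bool) → ℝ :=
    fun x => ∏ i' ∈ univ.erase i, (∑ j, v i' j * b2r (x j) - μ i') with hfdef
  obtain ⟨c, hdeg, hrep⟩ := exists_rep v μ (univ.erase i)
  -- nonvanishing from the E3 witness
  have hne : ∃ x, f x ≠ 0 := by
    obtain ⟨x, hx, -, hx3⟩ := hwit i
    refine ⟨fun j => if x j = 1 then true else false, ?_⟩
    have hb : ∀ j, b2r (if x j = 1 then true else false) = x j := by
      intro j
      rcases hx j with h0 | h1
      · rw [if_neg (by rw [h0]; norm_num), b2r, if_neg Bool.false_ne_true, h0]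
      · rw [if_pos h1, b2r, if_pos rfl, h1]
    rw [hfdef]
    refine Finset.prod_ne_zero_iff.mpr fun i' hi' => ?_
    have : ∑ j, v i' j * b2r (if x j = 1 then true else false) = ∑ j, v i' j * x j :=
      Finset.sum_congr rfl fun j _ => by rw [hb j]
    rw [this]
    exact sub_ne_zero.mpr (hx3 i' (Finset.ne_of_mem_erase hi'))
  -- edge-freeness in directions of the support of v i
  have hind : ∀ j ∈ (univ.filter fun j => v i j ≠ 0), ∀ x, f x * f (flp j x) = 0 := by
    intro j hj x
    have hvij : v i j ≠ 0 := (Finset.mem_filter.mp hj).2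
    by_contra hne0
    obtain ⟨h1, h2⟩ := mul_ne_zero_iff.mp hne0
    have key : ∀ y : Fin n → Bool, f y ≠ 0 → ∑ j', v i j' * b2r (y j') = μ i := by
      intro y hy
      obtain ⟨m, hm⟩ := hcov (xi y) (cube_xi y)
      by_cases hmi : m = i
      · rw [← hmi]; exact hm
      · exfalso
        have hm' : m ∈ univ.erase i := Finset.mem_erase.mpr ⟨hmi, Finset.mem_univ m⟩
        have := Finset.prod_ne_zero_iff.mp (hfdef ▸ hy) m hm'
        exact this (sub_eq_zero.mpr hm)
    have e1 := key x h1
    have e2 := key (flp j x) h2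
    have hdiff : ∑ j', v i j' * b2r (flp j x j') - ∑ j', v i j' * b2r (x j')
        = v i j * (b2r (!(x j)) - b2r (x j)) := by
      rw [← Finset.sum_sub_distrib]
      rw [Finset.sum_eq_single j]
      · rw [flp, Function.update_self]; ring
      · intro j' _ hj'
        rw [flp, Function.update_of_ne hj']; ring
      · intro hh; exact absurd (Finset.mem_univ _) hh
    rw [e1, e2, sub_self] at hdiff
    have : b2r (!(x j)) - b2r (x j) ≠ 0 := by
      cases x j <;> norm_num [b2r]
    exact this (by
      rcases mul_eq_zero.mp hdiff.symm with h | h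
      · exact absurd h hvij
      · exact h)
  have := small_support f c (univ.erase i).card (fun x => hrep x) hdeg _ hind hne
  calc (univ.filter fun j => v i j ≠ 0).card ≤ 2 * (univ.erase i).card := this
    _ ≤ 2 * k := by
        have : (univ.erase i).card ≤ (univ : Finset (Fin k)).card :=
          Finset.card_le_card (Finset.erase_subset _ _)
        simpa using Nat.mul_le_mul_left 2 (le_trans this (by simp))

end EC

/-- If the hyperplanes `⟨v i, x⟩ = μ i` form an essential cover of the `n`-cube, then
`2k² ≥ n`; in particular `k ≥ √(n/2)`. -/
theorem essential_cover_sqrt_bound {n k : ℕ}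
    (v : Fin k → Fin n → ℝ) (μ : Fin k → ℝ) (h : IsEssentialCover v μ) :
    n ≤ 2 * k ^ 2 ∧ Real.sqrt ((n : ℝ) / 2) ≤ (k : ℝ) := by
  classical
  have h1 : n ≤ 2 * k ^ 2 := by
    have hsub : (univ : Finset (Fin n)) ⊆
        univ.biUnion (fun i => univ.filter fun j => v i j ≠ 0) := by
      intro j _
      obtain ⟨i, hi⟩ := h.2.2.1 j
      exact Finset.mem_biUnion.mpr ⟨i, Finset.mem_univ _,
        Finset.mem_filter.mpr ⟨Finset.mem_univ _, hi⟩⟩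
    calc n = (univ : Finset (Fin n)).card := by simp
      _ ≤ (univ.biUnion (fun i => univ.filter fun j => v i j ≠ 0)).card :=
          Finset.card_le_card hsub
      _ ≤ ∑ i : Fin k, (univ.filter fun j => v i j ≠ 0).card := Finset.card_biUnion_le
      _ ≤ ∑ _i : Fin k, 2 * k := Finset.sum_le_sum fun i _ => EC.supp_bound v μ h i
      _ = 2 * k ^ 2 := by simp [Finset.sum_const]; ring
  refine ⟨h1, ?_⟩
  have h2 : (n : ℝ) / 2 ≤ (k : ℝ) ^ 2 := by
    have : (n : ℝ) ≤ 2 * (k : ℝ) ^ 2 := by exact_mod_cast h1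
    linarith
  calc Real.sqrt ((n : ℝ) / 2) ≤ Real.sqrt ((k : ℝ) ^ 2) := Real.sqrt_le_sqrt h2
    _ = (k : ℝ) := by rw [Real.sqrt_sq (Nat.cast_nonneg k)]
end

section
/- For every even integer n ≥ 2, the collection of n/2 + 1 hyperplanes given by the equations x₁ + x₂ + … + x_n = n/2 and x_{2i−1} − x_{2i} = 0 for i ∈ [n/2] forms an essential cover of the n-cube {0,1}^n. -/
open Finset

/-! If a vertex `x` lies on none of the hyperplanes `x_{2t} = x_{2t+1}`, every pair of coordinates
`{2t, 2t+1}` holds one `0` and one `1`, i.e. `x ∘ σ = 1 - x` for the involution `σ` swapping `2t`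
and `2t+1`. Summing over `σ` gives `∑ x = n - ∑ x`, so `x` lies on `∑ x = n/2`.
The alternating vertex `1010…10` lies on the sum hyperplane only, and turning its `1` at position
`2t` into a `0` gives a vertex lying on `x_{2t} = x_{2t+1}` only. -/

theorem IsCubeVertex.update {n : ℕ} {x : Fin n → ℝ} (hx : IsCubeVertex x) (a : Fin n) {b : ℝ}
    (hb : b = 0 ∨ b = 1) : IsCubeVertex (Function.update x a b) := by
  intro j
  rcases eq_or_ne j a with rfl | hj
  · simpa using hb
  · simpa [hj] using hx j

theorem IsCubeVertex.eq_one_sub_of_ne {n : ℕ} {x : Fin n → ℝ} (hx : IsCubeVertex x) {a b : Fin n}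
    (h : x a ≠ x b) : x b = 1 - x a := by
  rcases hx a with ha | ha <;> rcases hx b with hb | hb <;> simp_all

theorem sum_eq_card_div_two_of_comp_perm_eq_one_sub {ι : Type*} [Fintype ι] (σ : Equiv.Perm ι)
    {x : ι → ℝ} (hx : ∀ j, x (σ j) = 1 - x j) : ∑ j, x j = Fintype.card ι / 2 := by
  have h : ∑ j, x j = Fintype.card ι - ∑ j, x j :=
    calc ∑ j, x j = ∑ j, x (σ j) := (Equiv.sum_comp σ x).symm
      _ = ∑ j, (1 - x j) := by simp only [hx]
      _ = Fintype.card ι - ∑ j, x j := by simp [Finset.sum_sub_distrib]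
  linarith

namespace PairCover

variable {n : ℕ}

def pairLo (t : Fin (n / 2)) : Fin n := ⟨2 * t, by omega⟩

def pairHi (t : Fin (n / 2)) : Fin n := ⟨2 * t + 1, by omega⟩

theorem pairLo_ne_pairHi (s t : Fin (n / 2)) : pairLo s ≠ pairHi t := by
  simp only [pairLo, pairHi, ne_eq, Fin.ext_iff]; omega

theorem pairLo_injective : Function.Injective (pairLo (n := n)) := by
  intro s t h; simp only [pairLo, Fin.ext_iff] at h; omega

theorem exists_eq_pairLo_or_eq_pairHi (heven : Even n) (j : Fin n) :
    ∃ t, j = pairLo t ∨ j = pairHi t := by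
  obtain ⟨r, rfl⟩ := heven
  refine ⟨⟨j / 2, by omega⟩, ?_⟩
  simp only [pairLo, pairHi, Fin.ext_iff]; omega

def pairSwap (heven : Even n) : Equiv.Perm (Fin n) :=
  Function.Involutive.toPerm
    (fun j => ⟨if (j : ℕ) % 2 = 0 then j + 1 else j - 1, by
      obtain ⟨r, rfl⟩ := heven; split_ifs <;> omega⟩)
    (fun j => by ext; dsimp only; split_ifs <;> omega)

theorem pairSwap_val (heven : Even n) (j : Fin n) :
    (pairSwap heven j : ℕ) = if (j : ℕ) % 2 = 0 then (j : ℕ) + 1 else (j : ℕ) - 1 :=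
  rfl

theorem pairSwap_pairLo (heven : Even n) (t : Fin (n / 2)) :
    pairSwap heven (pairLo t) = pairHi t := by
  ext; simp [pairSwap_val, pairLo, pairHi]

theorem pairSwap_pairHi (heven : Even n) (t : Fin (n / 2)) :
    pairSwap heven (pairHi t) = pairLo t := by
  ext; simp [pairSwap_val, pairLo, pairHi, Nat.add_mod]

theorem comp_pairSwap_eq_one_sub (heven : Even n) {x : Fin n → ℝ} (hx : IsCubeVertex x)
    (hpairs : ∀ t, x (pairLo t) ≠ x (pairHi t)) (j : Fin n) :
    x (pairSwap heven j) = 1 - x j := by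
  obtain ⟨t, rfl | rfl⟩ := exists_eq_pairLo_or_eq_pairHi heven j
  · rw [pairSwap_pairLo]; exact hx.eq_one_sub_of_ne (hpairs t)
  · rw [pairSwap_pairHi]; linarith [hx.eq_one_sub_of_ne (hpairs t)]

theorem sum_eq_half_of_forall_pair_ne (heven : Even n) {x : Fin n → ℝ} (hx : IsCubeVertex x)
    (hpairs : ∀ t, x (pairLo t) ≠ x (pairHi t)) : ∑ j, x j = n / 2 := by
  rw [sum_eq_card_div_two_of_comp_perm_eq_one_sub (pairSwap heven)
    (comp_pairSwap_eq_one_sub heven hx hpairs), Fintype.card_fin]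

def alternating (n : ℕ) : Fin n → ℝ := fun j => if (j : ℕ) % 2 = 0 then 1 else 0

theorem isCubeVertex_alternating : IsCubeVertex (alternating n) := by
  intro j; unfold alternating; split_ifs <;> simp

@[simp]
theorem alternating_pairLo (t : Fin (n / 2)) : alternating n (pairLo t) = 1 := by
  simp [alternating, pairLo]

@[simp]
theorem alternating_pairHi (t : Fin (n / 2)) : alternating n (pairHi t) = 0 := by
  simp [alternating, pairHi]

theorem sum_alternating (heven : Even n) : ∑ j, alternating n j = n / 2 :=
  sum_eq_half_of_forall_pair_ne heven isCubeVertex_alternating (by simp)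

def pairCoverNormal (n : ℕ) : Fin (n / 2 + 1) → Fin n → ℝ :=
  fun i j =>
    if (i : ℕ) = 0 then 1
    else if (j : ℕ) = 2 * ((i : ℕ) - 1) then 1
    else if (j : ℕ) = 2 * ((i : ℕ) - 1) + 1 then -1
    else 0

noncomputable def pairCoverLevel (n : ℕ) : Fin (n / 2 + 1) → ℝ :=
  fun i => if (i : ℕ) = 0 then (n : ℝ) / 2 else 0

@[simp]
theorem pairCoverNormal_zero (j : Fin n) : pairCoverNormal n 0 j = 1 := by
  simp [pairCoverNormal]

theorem pairCoverNormal_succ (t : Fin (n / 2)) (j : Fin n) :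
    pairCoverNormal n t.succ j = if j = pairLo t then 1 else if j = pairHi t then -1 else 0 := by
  simp [pairCoverNormal, pairLo, pairHi, Fin.ext_iff]

@[simp]
theorem pairCoverLevel_zero : pairCoverLevel n 0 = n / 2 := by
  simp [pairCoverLevel]

@[simp]
theorem pairCoverLevel_succ (t : Fin (n / 2)) : pairCoverLevel n t.succ = 0 := by
  simp [pairCoverLevel]

theorem dot_pairCoverNormal_zero (x : Fin n → ℝ) :
    ∑ j, pairCoverNormal n 0 j * x j = ∑ j, x j := by
  simp

theorem dot_pairCoverNormal_succ (t : Fin (n / 2)) (x : Fin n → ℝ) :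
    ∑ j, pairCoverNormal n t.succ j * x j = x (pairLo t) - x (pairHi t) := by
  rw [Fintype.sum_eq_add (pairLo t) (pairHi t) (pairLo_ne_pairHi t t)]
  · simp [pairCoverNormal_succ, (pairLo_ne_pairHi t t).symm, sub_eq_add_neg]
  · rintro j ⟨hlo, hhi⟩
    simp [pairCoverNormal_succ, hlo, hhi]

theorem pairCoverNormal_ne_zero (hn : 0 < n) (i : Fin (n / 2 + 1)) : pairCoverNormal n i ≠ 0 := by
  intro h
  induction i using Fin.cases with
  | zero => simpa using congrFun h ⟨0, hn⟩
  | succ t => simpa [pairCoverNormal_succ] using congrFun h (pairLo t)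

theorem exists_dot_pairCoverNormal_eq (heven : Even n) {x : Fin n → ℝ} (hx : IsCubeVertex x) :
    ∃ i, ∑ j, pairCoverNormal n i j * x j = pairCoverLevel n i := by
  by_cases h : ∃ t, x (pairLo t) = x (pairHi t)
  · obtain ⟨t, ht⟩ := h
    exact ⟨t.succ, by rw [dot_pairCoverNormal_succ, pairCoverLevel_succ, ht, sub_self]⟩
  · push Not at h
    exact ⟨0, by rw [dot_pairCoverNormal_zero, pairCoverLevel_zero,
      sum_eq_half_of_forall_pair_ne heven hx h]⟩

theorem exists_vertex_only_on_zero (heven : Even n) :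
    ∃ x : Fin n → ℝ, IsCubeVertex x ∧ ∑ j, pairCoverNormal n 0 j * x j = pairCoverLevel n 0 ∧
      ∀ i, i ≠ 0 → ∑ j, pairCoverNormal n i j * x j ≠ pairCoverLevel n i := by
  refine ⟨alternating n, isCubeVertex_alternating, ?_, fun i hi => ?_⟩
  · rw [dot_pairCoverNormal_zero, sum_alternating heven, pairCoverLevel_zero]
  · induction i using Fin.cases with
    | zero => exact absurd rfl hi
    | succ s => simp [dot_pairCoverNormal_succ]

theorem exists_vertex_only_on_succ (heven : Even n) (t : Fin (n / 2)) :
    ∃ x : Fin n → ℝ, IsCubeVertex x ∧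
      ∑ j, pairCoverNormal n t.succ j * x j = pairCoverLevel n t.succ ∧
      ∀ i, i ≠ t.succ → ∑ j, pairCoverNormal n i j * x j ≠ pairCoverLevel n i := by
  set x := Function.update (alternating n) (pairLo t) 0
  have hlo (s : Fin (n / 2)) : x (pairLo s) = if s = t then 0 else 1 := by
    simp [x, Function.update_apply, pairLo_injective.eq_iff]
  have hhi (s : Fin (n / 2)) : x (pairHi s) = 0 := by
    simp [x, (pairLo_ne_pairHi t s).symm]
  have hsum : ∑ j, x j = n / 2 - 1 := by
    rw [Finset.sum_update_of_mem (mem_univ _), ← sum_alternating heven,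
      Finset.sum_eq_add_sum_sdiff_singleton_of_mem (mem_univ (pairLo t)) (alternating n)]
    simp
  refine ⟨x, isCubeVertex_alternating.update _ (Or.inl rfl), ?_, fun i hi => ?_⟩
  · simp [dot_pairCoverNormal_succ, hlo, hhi]
  · induction i using Fin.cases with
    | zero => simp [hsum]
    | succ s => simp_all [dot_pairCoverNormal_succ]

end PairCover

/-- For every even `n ≥ 2`, the `n/2 + 1` hyperplanes given by
`x₁ + ⋯ + x_n = n/2` and `x_{2i-1} - x_{2i} = 0` for `i ∈ [n/2]` form an essential
cover of the `n`-cube `{0,1}^n`. (Coordinates are `0`-indexed here: the `i`-th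
hyperplane, `1 ≤ i ≤ n/2`, reads `x_{2(i-1)} - x_{2(i-1)+1} = 0`.) -/
theorem construction_essential_cover (n : ℕ) (hn : 2 ≤ n) (heven : Even n) :
    IsEssentialCover
      (fun i : Fin (n / 2 + 1) => fun j : Fin n =>
        if (i : ℕ) = 0 then 1
        else if (j : ℕ) = 2 * ((i : ℕ) - 1) then 1
        else if (j : ℕ) = 2 * ((i : ℕ) - 1) + 1 then -1
        else 0)
      (fun i : Fin (n / 2 + 1) => if (i : ℕ) = 0 then (n : ℝ) / 2 else 0) :=
  ⟨PairCover.pairCoverNormal_ne_zero (by omega),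
    fun _ hx => PairCover.exists_dot_pairCoverNormal_eq heven hx,
    fun _ => ⟨0, by simp⟩,
    fun i => Fin.cases (PairCover.exists_vertex_only_on_zero heven)
      (PairCover.exists_vertex_only_on_succ heven) i⟩
end
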